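/- arXiv:2509.06303 — 6 statements merged into one kernel-verified Lean document; each statement's English description precedes it below -/
import Mathlib

section
/- Exponential moment bound for Rademacher quadratic forms (Lemma A.3). Let u = (u_1, ..., u_n) be a Rademacher random vector with independent coordinates satisfying P(u_i = 1) = P(u_i = -1) = 1/2, and let A be a symmetric n x n real matrix with zero diagonal entries. Then for every kappa with 0 < kappa < 1/(8 ||A||_2), E[ exp( kappa u^T A u ) ] <= exp( 8 kappa^2 ||A||_F^2 / ( 1 - 64 kappa^2 ||A||_2^2 ) ), where ||A||_2 is the operator (spectral) norm and ||A||_F is the Frobenius norm. -/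
/-!
Comparison with a Gaussian: if `1 - B` is positive definite and `B` has nonnegative diagonal,
then `E exp (uᵀ B u / 2) ≤ det (1 - B) ^ (-1/2)`. This goes by induction on the dimension:
summing out the last sign costs a factor `2 cosh c ≤ 2 exp (c² / 2)` with `c` linear in the
other signs, which is absorbed by passing to the Schur complement of the last diagonal entry of
`1 - B`, while `exp d * (1 - d) ≤ 1` absorbs the last diagonal entry `d` of `B`.

For `B = 2κA`, `det (1 - 2κA) = ∏ (1 - 2κλᵢ)`, and `log (1 - x) ≥ -x - x² / (1 - 2κ‖A‖₂)` on
the spectrum, together with `∑ λᵢ = tr A = 0` and `∑ λᵢ² = ‖A‖_F²`, gives the bound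
`exp (2κ²‖A‖_F² / (1 - 2κ‖A‖₂))`, which is at most the stated one.
-/

open MeasureTheory

/-- Frobenius norm of a real square matrix. -/
noncomputable def frobNorm {n : ℕ} (A : Matrix (Fin n) (Fin n) ℝ) : ℝ :=
  Real.sqrt (∑ i, ∑ j, (A i j) ^ 2)

/-- The `ℓ₂ → ℓ₂` operator (spectral) norm of a real square matrix. -/
noncomputable def l2OpNorm {n : ℕ} (A : Matrix (Fin n) (Fin n) ℝ) : ℝ :=
  ‖Matrix.toEuclideanCLM (𝕜 := ℝ) A‖

/-- Sign encoding of a Rademacher variable. -/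
def radSign (b : Bool) : ℝ := if b then 1 else -1

open Matrix Real
open scoped RealInnerProductSpace

namespace Matrix

variable {K : Type*} [Field K] {n : ℕ}

def schurLast (M : Matrix (Fin (n + 1)) (Fin (n + 1)) K) : Matrix (Fin n) (Fin n) K :=
  M.submatrix Fin.castSucc Fin.castSucc -
    (M (Fin.last n) (Fin.last n))⁻¹ •
      vecMulVec (fun i => M i.castSucc (Fin.last n)) (fun j => M (Fin.last n) j.castSucc)

theorem det_eq_mul_det_schurLast (M : Matrix (Fin (n + 1)) (Fin (n + 1)) K)
    (h : M (Fin.last n) (Fin.last n) ≠ 0) :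
    M.det = M (Fin.last n) (Fin.last n) * (schurLast M).det := by
  let N := M.submatrix finSumFinEquiv finSumFinEquiv
  have hD : N.toBlocks₂₂ = of fun _ _ => M (Fin.last n) (Fin.last n) := by
    ext i j; fin_cases i; fin_cases j; rfl
  let := N.toBlocks₂₂.invertibleOfIsUnitDet (by simpa [hD] using h)
  have hN : M.det = N.det := (det_submatrix_equiv_self _ _).symm
  rw [hN, ← fromBlocks_toBlocks N, det_fromBlocks₂₂,
    invOf_eq_nonsing_inv, inv_subsingleton, hD, det_unique]
  congr 2
  ext i j
  change M i.castSucc j.castSucc - ∑ k : Fin 1, (∑ l : Fin 1, M i.castSucc (Fin.last n) * _) *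
    M (Fin.last n) j.castSucc = _
  simp [schurLast, vecMulVec_apply]
  ring

theorem snoc_dotProduct_mulVec_snoc {R : Type*} [CommRing R]
    {M : Matrix (Fin (n + 1)) (Fin (n + 1)) R} (hM : M.IsSymm) (x : Fin n → R) (t : R) :
    (Fin.snoc x t : Fin (n + 1) → R) ⬝ᵥ M *ᵥ Fin.snoc x t =
      x ⬝ᵥ M.submatrix Fin.castSucc Fin.castSucc *ᵥ x +
        2 * t * ((fun i => M i.castSucc (Fin.last n)) ⬝ᵥ x) +
          M (Fin.last n) (Fin.last n) * t ^ 2 := by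
  simp only [dotProduct, mulVec, Fin.sum_univ_castSucc, Fin.snoc_castSucc, Fin.snoc_last,
    submatrix_apply, hM.apply (Fin.last n), mul_add, Finset.sum_add_distrib, Finset.mul_sum]
  have hcomm : ∑ i, t * x i * M (Fin.last n) i.castSucc =
      ∑ i, t * M (Fin.last n) i.castSucc * x i :=
    Finset.sum_congr rfl fun i _ => by ring
  ring_nf
  rw [hcomm, ← Finset.sum_mul]
  ring

theorem snoc_dotProduct_mulVec_snoc_eq_schurLast {M : Matrix (Fin (n + 1)) (Fin (n + 1)) K}
    (hM : M.IsSymm) (h : M (Fin.last n) (Fin.last n) ≠ 0) (x : Fin n → K) (t : K) :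
    (Fin.snoc x t : Fin (n + 1) → K) ⬝ᵥ M *ᵥ Fin.snoc x t =
      x ⬝ᵥ M.schurLast *ᵥ x + M (Fin.last n) (Fin.last n) *
        (t + (M (Fin.last n) (Fin.last n))⁻¹ *
          ((fun i => M i.castSucc (Fin.last n)) ⬝ᵥ x)) ^ 2 := by
  set c := fun i : Fin n => M i.castSucc (Fin.last n)
  have hrow : (fun j : Fin n => M (Fin.last n) j.castSucc) = c := funext fun _ => hM.apply _ _
  rw [snoc_dotProduct_mulVec_snoc hM, schurLast, hrow, sub_mulVec, dotProduct_sub, smul_mulVec,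
    dotProduct_smul, vecMulVec_mulVec, op_smul_eq_smul, dotProduct_smul, smul_eq_mul,
    smul_eq_mul, dotProduct_comm x c]
  field_simp
  ring

theorem IsSymm.schurLast {M : Matrix (Fin (n + 1)) (Fin (n + 1)) K} (hM : M.IsSymm) :
    M.schurLast.IsSymm :=
  (hM.submatrix _).sub <| IsSymm.smul (IsSymm.ext fun i j => by
    simp only [vecMulVec_apply, hM.apply (Fin.last n), mul_comm]) _

theorem PosDef.schurLast {M : Matrix (Fin (n + 1)) (Fin (n + 1)) ℝ} (hM : M.PosDef) :
    M.schurLast.PosDef := by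
  have hsymm : M.IsSymm := isHermitian_iff_isSymm.mp hM.isHermitian
  refine of_dotProduct_mulVec_pos (isHermitian_iff_isSymm.mpr hsymm.schurLast) fun x hx => ?_
  set t := -((M (Fin.last n) (Fin.last n))⁻¹ * ((fun i => M i.castSucc (Fin.last n)) ⬝ᵥ x))
  have hsnoc : (Fin.snoc x t : Fin (n + 1) → ℝ) ≠ 0 := fun h =>
    hx (funext fun i => by simpa using congrFun h i.castSucc)
  have hpos := hM.dotProduct_mulVec_pos hsnoc
  rwa [star_trivial, snoc_dotProduct_mulVec_snoc_eq_schurLast hsymm hM.diag_pos.ne', neg_add_cancel,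
    zero_pow two_ne_zero, mul_zero, add_zero, ← star_trivial x] at hpos

theorem one_sub_schurLast_one_sub (B : Matrix (Fin (n + 1)) (Fin (n + 1)) K) :
    1 - (1 - B).schurLast = B.submatrix Fin.castSucc Fin.castSucc +
      (1 - B (Fin.last n) (Fin.last n))⁻¹ •
        vecMulVec (fun i => B i.castSucc (Fin.last n)) (fun j => B (Fin.last n) j.castSucc) := by
  ext i j
  simp [schurLast, one_apply, vecMulVec_apply, (Fin.castSucc_lt_last _).ne,
    (Fin.castSucc_lt_last _).ne']
  ring

theorem dotProduct_mulVec_add_smul_vecMulVec {R : Type*} [CommRing R] (B : Matrix (Fin n) (Fin n) R)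
    (c : R) (b x : Fin n → R) :
    x ⬝ᵥ (B + c • vecMulVec b b) *ᵥ x = x ⬝ᵥ B *ᵥ x + c * (b ⬝ᵥ x) ^ 2 := by
  rw [add_mulVec, dotProduct_add, smul_mulVec, dotProduct_smul, vecMulVec_mulVec, op_smul_eq_smul,
    dotProduct_smul, smul_eq_mul, smul_eq_mul, dotProduct_comm x b]
  ring

theorem dotProduct_mulVec_self_eq_sum {R : Type*} [CommSemiring R] {ι : Type*} [Fintype ι]
    (A : Matrix ι ι R) (x : ι → R) : x ⬝ᵥ A *ᵥ x = ∑ i, ∑ j, x i * A i j * x j := by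
  simp [dotProduct, mulVec, Finset.mul_sum, mul_assoc]

namespace IsHermitian

variable {ι : Type*} [Fintype ι] [DecidableEq ι] {A : Matrix ι ι ℝ}

theorem det_one_sub_smul_eq_prod_eigenvalues (hA : A.IsHermitian) (c : ℝ) :
    (1 - c • A).det = ∏ i, (1 - c * hA.eigenvalues i) := by
  have hconj : 1 - c • A = Unitary.conjStarAlgAut ℝ _ hA.eigenvectorUnitary
      (diagonal fun i => 1 - c * hA.eigenvalues i) := by
    conv_lhs =>
      rw [hA.spectral_theorem, ← map_one (Unitary.conjStarAlgAut ℝ _ hA.eigenvectorUnitary)]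
    rw [← map_smul, ← map_sub, ← diagonal_one, ← diagonal_smul, ← diagonal_sub]
    rfl
  rw [hconj, Unitary.conjStarAlgAut_apply, det_mul, det_mul, mul_comm, ← mul_assoc, ← det_mul,
    Unitary.coe_star_mul_self, det_one, one_mul, det_diagonal]

theorem sum_sq_eigenvalues_eq_trace_mul_self (hA : A.IsHermitian) :
    ∑ i, hA.eigenvalues i ^ 2 = (A * A).trace := by
  have hconj : A * A = Unitary.conjStarAlgAut ℝ _ hA.eigenvectorUnitary
      (diagonal fun i => hA.eigenvalues i ^ 2) := by
    conv_lhs => rw [hA.spectral_theorem]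
    rw [← map_mul, diagonal_mul_diagonal]
    simp [sq]
  rw [hconj, Unitary.conjStarAlgAut_apply, trace_mul_cycle, Unitary.coe_star_mul_self, one_mul,
    trace_diagonal]

end IsHermitian

end Matrix

theorem Real.exp_add_add_exp_sub_le (a c : ℝ) :
    exp (a + c) + exp (a - c) ≤ 2 * exp (a + c ^ 2 / 2) :=
  calc exp (a + c) + exp (a - c) = 2 * exp a * cosh c := by
        rw [cosh_eq, exp_add, exp_sub, exp_neg]; field_simp
    _ ≤ 2 * exp a * exp (c ^ 2 / 2) := by gcongr; exact cosh_le_exp_half_sq c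
    _ = 2 * exp (a + c ^ 2 / 2) := by rw [exp_add]; ring

theorem Real.exp_half_mul_sqrt_one_sub_le_one (d : ℝ) : exp (d / 2) * √(1 - d) ≤ 1 := by
  have h : exp d * (1 - d) ≤ 1 := by
    have := mul_le_mul_of_nonneg_left (one_sub_le_exp_neg d) (exp_pos d).le
    rwa [← exp_add, add_neg_cancel, exp_zero] at this
  rw [exp_half, ← sqrt_mul (exp_pos d).le]
  exact sqrt_le_one.mpr h

theorem Real.exp_neg_sub_sq_div_le_one_sub {x γ : ℝ} (hx : x ≤ γ) (hγ : γ < 1) :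
    exp (-x - x ^ 2 / (1 - γ)) ≤ 1 - x := by
  have hx1 : 0 < 1 - x := by linarith
  calc exp (-x - x ^ 2 / (1 - γ)) ≤ exp (-x - x ^ 2 / (1 - x)) := by
        gcongr exp (-x - ?_)
        exact div_le_div_of_nonneg_left (sq_nonneg x) (by linarith) (by linarith)
    _ = exp (1 - (1 - x)⁻¹) := by congr 1; field_simp; ring
    _ ≤ exp (log (1 - x)) := exp_le_exp.mpr (one_sub_inv_le_log_of_pos hx1)
    _ = 1 - x := exp_log hx1

variable {n : ℕ}

theorem dotProduct_mulVec_le_l2OpNorm (A : Matrix (Fin n) (Fin n) ℝ) (x : Fin n → ℝ) :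
    x ⬝ᵥ A *ᵥ x ≤ l2OpNorm A * (x ⬝ᵥ x) := by
  set y : EuclideanSpace ℝ (Fin n) := WithLp.toLp 2 x
  have hy : ‖y‖ ^ 2 = x ⬝ᵥ x := by
    rw [← real_inner_self_eq_norm_sq, EuclideanSpace.inner_toLp_toLp, star_trivial]
  calc x ⬝ᵥ A *ᵥ x = ⟪y, toEuclideanCLM (𝕜 := ℝ) A y⟫ := (inner_toEuclideanCLM A y y).symm
    _ ≤ ‖y‖ * ‖toEuclideanCLM (𝕜 := ℝ) A y‖ := real_inner_le_norm _ _
    _ ≤ ‖y‖ * (l2OpNorm A * ‖y‖) := by gcongr; exact (toEuclideanCLM (𝕜 := ℝ) A).le_opNorm y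
    _ = l2OpNorm A * (x ⬝ᵥ x) := by rw [← hy]; ring

theorem eigenvalues_le_l2OpNorm {A : Matrix (Fin n) (Fin n) ℝ} (hA : A.IsHermitian)
    (i : Fin n) : hA.eigenvalues i ≤ l2OpNorm A := by
  set v := hA.eigenvectorBasis i
  have hv : v.ofLp ⬝ᵥ v.ofLp = 1 := by
    rw [← star_trivial v.ofLp, ← EuclideanSpace.inner_eq_star_dotProduct, star_trivial,
      real_inner_self_eq_norm_sq, hA.eigenvectorBasis.orthonormal.1 i, one_pow]
  have h := dotProduct_mulVec_le_l2OpNorm A v.ofLp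
  rwa [hA.mulVec_eigenvectorBasis, dotProduct_smul, hv, smul_eq_mul, mul_one, mul_one] at h

theorem Matrix.IsSymm.trace_mul_self_eq_frobNorm_sq {A : Matrix (Fin n) (Fin n) ℝ}
    (hA : A.IsSymm) :
    (A * A).trace = frobNorm A ^ 2 := by
  rw [frobNorm, sq_sqrt (by positivity)]
  simp only [trace, diag_apply, mul_apply, sq, hA.apply]

theorem posDef_one_sub_smul {A : Matrix (Fin n) (Fin n) ℝ} (hA : A.IsSymm) {c : ℝ}
    (hc : 0 ≤ c) (hcA : c * l2OpNorm A < 1) : (1 - c • A).PosDef := by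
  refine PosDef.of_dotProduct_mulVec_pos
    (isHermitian_iff_isSymm.mpr (isSymm_one.sub (hA.smul c))) fun x hx => ?_
  have hxx : 0 < x ⬝ᵥ x := by simpa using dotProduct_self_star_pos_iff.mpr hx
  have hA := mul_le_mul_of_nonneg_left (dotProduct_mulVec_le_l2OpNorm A x) hc
  rw [star_trivial, sub_mulVec, one_mulVec, smul_mulVec, dotProduct_sub, dotProduct_smul,
    smul_eq_mul]
  nlinarith

theorem exp_le_det_one_sub_smul {A : Matrix (Fin n) (Fin n) ℝ} (hA : A.IsSymm) {c : ℝ}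
    (hc : 0 ≤ c) (hcA : c * l2OpNorm A < 1) :
    exp (-(c * A.trace) - c ^ 2 * frobNorm A ^ 2 / (1 - c * l2OpNorm A)) ≤ (1 - c • A).det := by
  have hH : A.IsHermitian := isHermitian_iff_isSymm.mpr hA
  rw [hH.det_one_sub_smul_eq_prod_eigenvalues, hH.trace_eq_sum_eigenvalues,
    ← hA.trace_mul_self_eq_frobNorm_sq, ← hH.sum_sq_eigenvalues_eq_trace_mul_self]
  calc exp (-(c * ∑ i, (hH.eigenvalues i : ℝ)) -
        c ^ 2 * (∑ i, hH.eigenvalues i ^ 2) / (1 - c * l2OpNorm A))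
      = ∏ i, exp (-(c * hH.eigenvalues i) - (c * hH.eigenvalues i) ^ 2 / (1 - c * l2OpNorm A)) := by
        rw [← exp_sum, Finset.sum_sub_distrib, Finset.sum_neg_distrib, Finset.mul_sum,
          Finset.mul_sum, Finset.sum_div]
        simp only [mul_pow]
    _ ≤ ∏ i, (1 - c * hH.eigenvalues i) :=
        Finset.prod_le_prod (fun _ _ => (exp_pos _).le) fun i _ => exp_neg_sub_sq_div_le_one_sub
          (mul_le_mul_of_nonneg_left (eigenvalues_le_l2OpNorm hH i) hc) hcA

theorem inv_sqrt_det_one_sub_smul_le {A : Matrix (Fin n) (Fin n) ℝ} (hA : A.IsSymm)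
    (htr : A.trace = 0) {c : ℝ} (hc : 0 ≤ c) (hcA : c * l2OpNorm A < 1) :
    (√(1 - c • A).det)⁻¹ ≤ exp (c ^ 2 * frobNorm A ^ 2 / (2 * (1 - c * l2OpNorm A))) := by
  have hdet := exp_le_det_one_sub_smul hA hc hcA
  rw [htr] at hdet
  rw [inv_le_comm₀ (sqrt_pos.mpr ((exp_pos _).trans_le hdet)) (exp_pos _), ← exp_neg,
    ← sqrt_sq (exp_pos _).le, ← exp_nat_mul]
  have hcA' : 1 - c * l2OpNorm A ≠ 0 := by linarith
  exact sqrt_le_sqrt (le_of_eq_of_le (by congr 1; field_simp; ring) hdet)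

theorem sum_radSign_eq_sum_snoc (f : (Fin (n + 1) → ℝ) → ℝ) :
    ∑ s : Fin (n + 1) → Bool, f (radSign ∘ s) =
      ∑ s : Fin n → Bool, (f (Fin.snoc (radSign ∘ s) 1) + f (Fin.snoc (radSign ∘ s) (-1))) := by
  rw [← (Fin.snocEquiv fun _ => Bool).sum_comp, Fintype.sum_prod_type, Fintype.sum_bool,
    Finset.sum_add_distrib]
  simp [Fin.snocEquiv, Fin.comp_snoc, radSign]

theorem exp_half_snoc_add_exp_half_snoc_le {B : Matrix (Fin (n + 1)) (Fin (n + 1)) ℝ}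
    (hB : B.IsSymm) (hd0 : 0 ≤ B (Fin.last n) (Fin.last n)) (hd1 : B (Fin.last n) (Fin.last n) < 1)
    (x : Fin n → ℝ) :
    exp ((Fin.snoc x 1 : Fin (n + 1) → ℝ) ⬝ᵥ B *ᵥ Fin.snoc x 1 / 2) +
        exp ((Fin.snoc x (-1) : Fin (n + 1) → ℝ) ⬝ᵥ B *ᵥ Fin.snoc x (-1) / 2) ≤
      2 * exp (B (Fin.last n) (Fin.last n) / 2) * exp (x ⬝ᵥ (1 - (1 - B).schurLast) *ᵥ x / 2) := by
  have hrow : (fun j : Fin n => B (Fin.last n) j.castSucc) = fun i => B i.castSucc (Fin.last n) :=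
    funext fun _ => hB.apply _ _
  rw [snoc_dotProduct_mulVec_snoc hB, snoc_dotProduct_mulVec_snoc hB, one_sub_schurLast_one_sub,
    hrow, dotProduct_mulVec_add_smul_vecMulVec]
  set d := B (Fin.last n) (Fin.last n)
  set q := x ⬝ᵥ B.submatrix Fin.castSucc Fin.castSucc *ᵥ x
  set c := (fun i => B i.castSucc (Fin.last n)) ⬝ᵥ x
  have hc : c ^ 2 ≤ (1 - d)⁻¹ * c ^ 2 :=
    le_mul_of_one_le_left (sq_nonneg c) (one_le_inv₀ (by linarith) |>.mpr (by linarith))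
  calc exp ((q + 2 * 1 * c + d * 1 ^ 2) / 2) + exp ((q + 2 * -1 * c + d * (-1) ^ 2) / 2)
      = exp ((q + d) / 2 + c) + exp ((q + d) / 2 - c) := by ring_nf
    _ ≤ 2 * exp ((q + d) / 2 + c ^ 2 / 2) := exp_add_add_exp_sub_le _ _
    _ ≤ 2 * exp (d / 2 + (q + (1 - d)⁻¹ * c ^ 2) / 2) := by gcongr 2 * exp ?_; linarith
    _ = _ := by rw [exp_add]; ring

theorem sum_exp_half_radSign_mul_sqrt_det_le :
    ∀ {n : ℕ} (B : Matrix (Fin n) (Fin n) ℝ), (∀ i, 0 ≤ B i i) → (1 - B).PosDef →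
      (∑ s : Fin n → Bool, exp ((radSign ∘ s) ⬝ᵥ B *ᵥ (radSign ∘ s) / 2)) * √(1 - B).det ≤ 2 ^ n
  | 0, B, _, _ => by simp
  | n + 1, B, hdiag, hB => by
    have hsymm : B.IsSymm := by
      simpa using (isHermitian_iff_isSymm.mp hB.isHermitian).sub isSymm_one
    set d := B (Fin.last n) (Fin.last n)
    have hd1 : 0 < 1 - d := by simpa using hB.diag_pos (i := Fin.last n)
    set B' := 1 - (1 - B).schurLast
    have hB' : (1 - B').PosDef := by rw [sub_sub_cancel]; exact hB.schurLast
    have hdiag' : ∀ i, 0 ≤ B' i i := fun i => by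
      simp only [B', one_sub_schurLast_one_sub, Matrix.add_apply, submatrix_apply,
        Matrix.smul_apply, vecMulVec_apply, smul_eq_mul, hsymm.apply (Fin.last n)]
      exact add_nonneg (hdiag _) (mul_nonneg (inv_nonneg.mpr hd1.le) (mul_self_nonneg _))
    have hdet : (1 - B).det = (1 - d) * (1 - B').det := by
      rw [sub_sub_cancel, det_eq_mul_det_schurLast _ (by simpa using hd1.ne')]
      simp [d]
    calc (∑ s : Fin (n + 1) → Bool, exp ((radSign ∘ s) ⬝ᵥ B *ᵥ (radSign ∘ s) / 2)) * √(1 - B).det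
        = (∑ s : Fin n → Bool,
            (exp ((Fin.snoc (radSign ∘ s) 1 : Fin (n + 1) → ℝ) ⬝ᵥ B *ᵥ
                Fin.snoc (radSign ∘ s) 1 / 2) +
              exp ((Fin.snoc (radSign ∘ s) (-1) : Fin (n + 1) → ℝ) ⬝ᵥ B *ᵥ
                Fin.snoc (radSign ∘ s) (-1) / 2))) * (√(1 - d) * √(1 - B').det) := by
          rw [sum_radSign_eq_sum_snoc (fun x => exp (x ⬝ᵥ B *ᵥ x / 2)), hdet, sqrt_mul hd1.le]
      _ ≤ (∑ s : Fin n → Bool,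
              2 * exp (d / 2) * exp ((radSign ∘ s) ⬝ᵥ B' *ᵥ (radSign ∘ s) / 2)) *
            (√(1 - d) * √(1 - B').det) := by
          gcongr with s
          exact exp_half_snoc_add_exp_half_snoc_le hsymm (hdiag _) (by linarith) _
      _ = 2 * (exp (d / 2) * √(1 - d)) *
            ((∑ s : Fin n → Bool, exp ((radSign ∘ s) ⬝ᵥ B' *ᵥ (radSign ∘ s) / 2)) *
              √(1 - B').det) := by
          rw [← Finset.mul_sum]; ring
      _ ≤ 2 * 1 * 2 ^ n := by
          gcongr
          · exact exp_half_mul_sqrt_one_sub_le_one d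
          · exact sum_exp_half_radSign_mul_sqrt_det_le B' hdiag' hB'
      _ = 2 ^ (n + 1) := by ring

theorem integral_uniformOfFintype {α : Type*} [Fintype α] [Nonempty α] [MeasurableSpace α]
    [MeasurableSingletonClass α] (f : α → ℝ) :
    ∫ a, f a ∂(PMF.uniformOfFintype α).toMeasure = (Fintype.card α : ℝ)⁻¹ * ∑ a, f a := by
  simp [PMF.integral_eq_sum, PMF.uniformOfFintype_apply, Finset.mul_sum]

theorem integral_exp_half_radSign_le (B : Matrix (Fin n) (Fin n) ℝ) (hdiag : ∀ i, 0 ≤ B i i)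
    (hB : (1 - B).PosDef) :
    ∫ s, exp ((radSign ∘ s) ⬝ᵥ B *ᵥ (radSign ∘ s) / 2)
        ∂(PMF.uniformOfFintype (Fin n → Bool)).toMeasure ≤ (√(1 - B).det)⁻¹ := by
  have hdet : 0 < √(1 - B).det := sqrt_pos.mpr hB.det_pos
  rw [integral_uniformOfFintype, Fintype.card_fun, Fintype.card_bool, Fintype.card_fin,
    Nat.cast_pow, Nat.cast_ofNat, inv_mul_le_iff₀ (by positivity), ← div_eq_mul_inv,
    le_div_iff₀ hdet]
  exact sum_exp_half_radSign_mul_sqrt_det_le B hdiag hB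

/-- **Exponential moment bound for Rademacher quadratic forms.**
Let `u = (u₁,…,uₙ)` be a vector of i.i.d. Rademacher signs (uniform on `{-1,1}ⁿ`) and `A`
a symmetric `n × n` real matrix with zero diagonal.  For `0 < κ < 1/(8‖A‖₂)`:
`E[exp(κ uᵀ A u)] ≤ exp(8 κ² ‖A‖_F² / (1 - 64 κ² ‖A‖₂²))`. -/
theorem rademacher_quadratic_mgf (n : ℕ) (A : Matrix (Fin n) (Fin n) ℝ)
    (hA : A.IsSymm) (hdiag : ∀ i, A i i = 0)
    (κ : ℝ) (hκ0 : 0 < κ) (hκ : κ < 1 / (8 * l2OpNorm A)) :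
    (∫ s, Real.exp (κ * ∑ i, ∑ j, radSign (s i) * A i j * radSign (s j))
        ∂((PMF.uniformOfFintype (Fin n → Bool)).toMeasure))
      ≤ Real.exp (8 * κ ^ 2 * (frobNorm A) ^ 2 / (1 - 64 * κ ^ 2 * (l2OpNorm A) ^ 2)) := by
  have hL : 0 < l2OpNorm A := by
    by_contra! hL
    simp [le_antisymm hL (norm_nonneg _)] at hκ
    linarith
  have hκL : 8 * (κ * l2OpNorm A) < 1 := by rw [lt_div_iff₀ (by positivity)] at hκ; linarith
  have hcL : 2 * κ * l2OpNorm A < 1 := by linarith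
  have hPD : (1 - (2 * κ) • A).PosDef := posDef_one_sub_smul hA (by positivity) hcL
  have hform (s : Fin n → Bool) : κ * ∑ i, ∑ j, radSign (s i) * A i j * radSign (s j) =
      (radSign ∘ s) ⬝ᵥ ((2 * κ) • A) *ᵥ (radSign ∘ s) / 2 := by
    rw [smul_mulVec, dotProduct_smul, dotProduct_mulVec_self_eq_sum, smul_eq_mul]
    simp only [Function.comp_apply]
    ring
  simp_rw [hform]
  calc _ ≤ (√(1 - (2 * κ) • A).det)⁻¹ := integral_exp_half_radSign_le _ (by simp [hdiag]) hPD
    _ ≤ exp ((2 * κ) ^ 2 * frobNorm A ^ 2 / (2 * (1 - 2 * κ * l2OpNorm A))) :=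
        inv_sqrt_det_one_sub_smul_le hA (by simp [trace, hdiag]) (by positivity) hcL
    _ ≤ _ := by
        rw [exp_le_exp, div_le_div_iff₀ (by linarith) (by nlinarith [mul_pos hκ0 hL])]
        nlinarith [mul_nonneg (by positivity : 0 ≤ κ ^ 2 * frobNorm A ^ 2)
          (sq_nonneg (16 * κ * l2OpNorm A - 1))]
end

section
/- Binomial moment-generating-function bound for the squared overlap (computation in Part II of the proof of Theorem 1). Let n and s be positive integers with s <= n, and let c > 0 satisfy s^2 <= c n. If Y ~ Binomial(s, s/n), then E[ (c n / s^2)^{Y^2 / s} ] = sum_{x=0}^{s} (c n / s^2)^{x^2/s} binom(s, x) (s/n)^x (1 - s/n)^{s - x} <= ( 1 - s/n + c/s )^s <= exp(c). -/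
/-- **Binomial moment-generating-function bound for the squared overlap.**
Let `s ≤ n` be positive integers and `c > 0` with `s² ≤ c n`.  If `Y ~ Binomial(s, s/n)`,
then `E[(cn/s²)^(Y²/s)] = ∑_{x=0}^s (cn/s²)^(x²/s) C(s,x) (s/n)^x (1-s/n)^(s-x)
≤ (1 - s/n + c/s)^s ≤ exp(c)`. -/
theorem binomial_overlap_mgf_bound (n s : ℕ) (c : ℝ)
    (hs : 1 ≤ s) (hsn : s ≤ n) (hc : 0 < c) (hcn : ((s : ℝ)) ^ 2 ≤ c * n) :
    (∑ x ∈ Finset.range (s + 1),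
        (c * n / (s : ℝ) ^ 2) ^ (((x : ℝ)) ^ 2 / (s : ℝ)) * (s.choose x : ℝ) *
          ((s : ℝ) / (n : ℝ)) ^ x * (1 - (s : ℝ) / (n : ℝ)) ^ (s - x))
      ≤ (1 - (s : ℝ) / (n : ℝ) + c / (s : ℝ)) ^ s ∧
    (1 - (s : ℝ) / (n : ℝ) + c / (s : ℝ)) ^ s ≤ Real.exp c := by
  have hs0 : (0:ℝ) < s := by exact_mod_cast hs
  have hn0 : (0:ℝ) < n := lt_of_lt_of_le hs0 (by exact_mod_cast hsn)
  have hsn' : (s:ℝ) / n ≤ 1 := by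
    rw [div_le_one hn0]; exact_mod_cast hsn
  have hB1 : (1:ℝ) ≤ c * n / (s:ℝ) ^ 2 := by
    rw [le_div_iff₀ (by positivity)]; simpa using hcn
  have hsc : (s:ℝ) / n ≤ c / s := by
    rw [div_le_div_iff₀ hn0 hs0]
    nlinarith
  have hbase1 : (1:ℝ) ≤ 1 - (s:ℝ)/n + c/s := by linarith
  constructor
  · have key : ∀ x ∈ Finset.range (s + 1),
        (c * n / (s : ℝ) ^ 2) ^ (((x : ℝ)) ^ 2 / (s : ℝ)) * (s.choose x : ℝ) *
          ((s : ℝ) / (n : ℝ)) ^ x * (1 - (s : ℝ) / (n : ℝ)) ^ (s - x)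
        ≤ (c / (s:ℝ)) ^ x * (1 - (s:ℝ)/n) ^ (s - x) * (s.choose x : ℝ) := by
      intro x hx
      have hxs : x ≤ s := Nat.lt_succ_iff.mp (Finset.mem_range.mp hx)
      have hexp : ((x:ℝ))^2 / s ≤ (x:ℝ) := by
        rw [div_le_iff₀ hs0]
        have : (x:ℝ) ≤ s := by exact_mod_cast hxs
        nlinarith [Nat.cast_nonneg (α := ℝ) x]
      have h1 : (c * n / (s : ℝ) ^ 2) ^ (((x : ℝ)) ^ 2 / (s : ℝ))
          ≤ (c * n / (s : ℝ) ^ 2) ^ (x:ℕ) := by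
        calc (c * n / (s : ℝ) ^ 2) ^ (((x : ℝ)) ^ 2 / (s : ℝ))
            ≤ (c * n / (s : ℝ) ^ 2) ^ ((x:ℝ)) :=
              Real.rpow_le_rpow_of_exponent_le hB1 hexp
          _ = (c * n / (s : ℝ) ^ 2) ^ (x:ℕ) := Real.rpow_natCast _ x
      have hmul : (c * n / (s:ℝ)^2) ^ x * ((s:ℝ)/n) ^ x = (c / (s:ℝ)) ^ x := by
        rw [← mul_pow]
        congr 1
        field_simp
      have h2 : (c * n / (s : ℝ) ^ 2) ^ (((x : ℝ)) ^ 2 / (s : ℝ)) * (s.choose x : ℝ) *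
          ((s : ℝ) / (n : ℝ)) ^ x * (1 - (s : ℝ) / (n : ℝ)) ^ (s - x)
          ≤ (c * n / (s:ℝ)^2) ^ x * (s.choose x : ℝ) *
          ((s : ℝ) / (n : ℝ)) ^ x * (1 - (s : ℝ) / (n : ℝ)) ^ (s - x) := by
        have hnn : (0:ℝ) ≤ (s.choose x : ℝ) * ((s : ℝ) / (n : ℝ)) ^ x *
            (1 - (s : ℝ) / (n : ℝ)) ^ (s - x) := by
          have := sub_nonneg.mpr hsn'
          positivity
        nlinarith [h1, hnn]
      calc _ ≤ (c * n / (s:ℝ)^2) ^ x * (s.choose x : ℝ) *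
          ((s : ℝ) / (n : ℝ)) ^ x * (1 - (s : ℝ) / (n : ℝ)) ^ (s - x) := h2
        _ = (c / (s:ℝ)) ^ x * (1 - (s:ℝ)/n) ^ (s - x) * (s.choose x : ℝ) := by
            rw [← hmul]; ring
    calc _ ≤ ∑ x ∈ Finset.range (s + 1),
          (c / (s:ℝ)) ^ x * (1 - (s:ℝ)/n) ^ (s - x) * (s.choose x : ℝ) :=
        Finset.sum_le_sum key
      _ = (c / (s:ℝ) + (1 - (s:ℝ)/n)) ^ s := (add_pow _ _ s).symm
      _ = (1 - (s : ℝ) / (n : ℝ) + c / (s : ℝ)) ^ s := by ring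
  · have h3 : 1 - (s:ℝ)/n + c/s ≤ Real.exp (c/s) := by
      have := Real.add_one_le_exp (c/s - (s:ℝ)/n)
      calc 1 - (s:ℝ)/n + c/s = (c/s - (s:ℝ)/n) + 1 := by ring
        _ ≤ Real.exp (c/s - (s:ℝ)/n) := this
        _ ≤ Real.exp (c/s) := Real.exp_le_exp.mpr (by
            have : (0:ℝ) ≤ (s:ℝ)/n := by positivity
            linarith)
    calc (1 - (s : ℝ) / (n : ℝ) + c / (s : ℝ)) ^ s
        ≤ (Real.exp (c/s)) ^ s := pow_le_pow_left₀ (by linarith) h3 s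
      _ = Real.exp (c/s * s) := by rw [← Real.exp_nat_mul]; ring_nf
      _ = Real.exp c := by rw [div_mul_cancel₀]; exact ne_of_gt hs0
end

section
/- Martingale structure and exact variance of the bilinear CUSUM statistic (Part I of the proof of Lemma B.5). Let N and T be positive integers, (d_{t,l}), 1 <= t,l <= T, real weights, and for each t in [T] let a^{(t)}, b^{(t)} be random vectors in R^N all of whose 2 N T coordinates {a^{(t)}_k, b^{(t)}_k} are jointly independent, mean zero, square integrable, and satisfy Var(a^{(t)}_k) = Var(b^{(t)}_k) = sigma_k^2 for every t (the variances do not depend on t). Set Upsilon = sum_{t=1}^T sum_{l=1}^T d_{t,l} (a^{(t)})^T b^{(l)} and v_t = (a^{(t)})^T ( sum_{l=1}^T d_{t,l} b^{(l)} ), and let F_t be the sigma-algebra generated by b^{(1)},...,b^{(T)}, a^{(1)},...,a^{(t)}. Then: (1) E(Upsilon) = 0; (2) Upsilon = sum_{t=1}^T v_t and E( v_t | F_{t-1} ) = 0 for every t, so (v_t) is a martingale difference sequence with respect to (F_t); (3) Var(Upsilon) = ( sum_{t=1}^T sum_{l=1}^T d_{t,l}^2 ) sum_{k=1}^N sigma_k^4;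 and (4) sum_{t=1}^T E[ E( v_t^2 | F_{t-1} ) ] = Var(Upsilon). -/
/-!
Write `X_{tlk} = a⁽ᵗ⁾_k b⁽ˡ⁾_k`, so that `Υ = ∑ d_{t,l} X_{tlk}` and `v_t` collects the terms with
first index `t`. Independence of the `2NT` centred coordinates factorises
`E[X_{tlk} X_{t'l'k'}] = E[a⁽ᵗ⁾_k a⁽ᵗ'⁾_{k'}] E[b⁽ˡ⁾_k b⁽ˡ'⁾_{k'}]`, which is `σ_k⁴` if the
triples agree and `0` otherwise. So the `X_{tlk}` are orthogonal in `L²`, and Pythagoras gives both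
`Var Υ = E Υ² = ∑ d_{t,l}² σ_k⁴` and `E v_t² = ∑_{l,k} d_{t,l}² σ_k⁴`. The martingale-difference
property holds because the weights `∑_l d_{t,l} b⁽ˡ⁾_k` of `v_t` are `F_{t-1}`-measurable, while
`a⁽ᵗ⁾` is centred and independent of `F_{t-1}`.
-/

open MeasureTheory ProbabilityTheory

namespace MosaicStmt15

/-- The filtration `F_j`: the σ-algebra generated by `b⁽¹⁾,…,b⁽ᵀ⁾` together with
`a⁽ˢ⁾` for (0-indexed) `s < j`. -/
def filtrF {Ω : Type*} (N T : ℕ) (a b : Fin T → Fin N → Ω → ℝ) (j : ℕ) :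
    MeasurableSpace Ω :=
  (⨆ l : Fin T, MeasurableSpace.comap (fun ω k => b l k ω) MeasurableSpace.pi) ⊔
    ⨆ s : Fin T, ⨆ _ : (s : ℕ) < j,
      MeasurableSpace.comap (fun ω k => a s k ω) MeasurableSpace.pi

section OrthogonalSum

variable {Ω κ : Type*} [MeasurableSpace Ω] {μ : Measure Ω} {X : κ → Ω → ℝ}

theorem integral_sq_sum_of_pairwise_orthogonal
    (hint : ∀ p q, Integrable (fun ω => X p ω * X q ω) μ)
    (horth : Pairwise fun p q => ∫ ω, X p ω * X q ω ∂μ = 0) (c : κ → ℝ) (P : Finset κ) :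
    ∫ ω, (∑ p ∈ P, c p * X p ω) ^ 2 ∂μ = ∑ p ∈ P, c p ^ 2 * ∫ ω, X p ω ^ 2 ∂μ := by
  have hexpand : ∀ ω, (∑ p ∈ P, c p * X p ω) ^ 2
      = ∑ p ∈ P, ∑ q ∈ P, c p * c q * (X p ω * X q ω) := fun ω => by
    rw [sq, Finset.sum_mul_sum]
    exact Finset.sum_congr rfl fun p _ => Finset.sum_congr rfl fun q _ => by ring
  simp_rw [hexpand]
  rw [integral_finsetSum _ fun p _ => integrable_finsetSum _ fun q _ => (hint p q).const_mul _]
  refine Finset.sum_congr rfl fun p hp => ?_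
  rw [integral_finsetSum _ fun q _ => (hint p q).const_mul _,
    Finset.sum_eq_single p (fun q _ hqp => by rw [integral_const_mul, horth hqp.symm, mul_zero])
      (absurd hp), integral_const_mul]
  simp only [sq]

end OrthogonalSum

section IndependentFamily

variable {Ω ι : Type*} [MeasurableSpace Ω] {μ : Measure Ω} {Z : ι → Ω → ℝ}

theorem integral_mul_eq_ite_variance [DecidableEq ι] (hZ : iIndepFun Z μ)
    (hL2 : ∀ i, MemLp (Z i) 2 μ) (hmean : ∀ i, μ[Z i] = 0) (i j : ι) :
    ∫ ω, Z i ω * Z j ω ∂μ = if i = j then variance (Z i) μ else 0 := by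
  split_ifs with hij
  · subst hij
    rw [variance_of_integral_eq_zero (hL2 i).aestronglyMeasurable.aemeasurable (hmean i)]
    simp only [sq]
  · rw [(hZ.indepFun hij).integral_fun_mul_eq_mul_integral (hL2 i).1 (hL2 j).1, hmean i,
      zero_mul]

theorem integral_mul_mul_mul_eq (hZ : iIndepFun Z μ) (hmeas : ∀ i, Measurable (Z i))
    {i i' j j' : ι} (hij : i ≠ j) (hij' : i ≠ j') (hi'j : i' ≠ j) (hi'j' : i' ≠ j') :
    ∫ ω, (Z i ω * Z j ω) * (Z i' ω * Z j' ω) ∂μ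
      = (∫ ω, Z i ω * Z i' ω ∂μ) * ∫ ω, Z j ω * Z j' ω ∂μ := by
  have hindep := hZ.indepFun_mul_mul hmeas i i' j j' hij hij' hi'j hi'j'
  have h := hindep.integral_fun_mul_eq_mul_integral
    ((hmeas i).mul (hmeas i')).aestronglyMeasurable ((hmeas j).mul (hmeas j')).aestronglyMeasurable
  simp only [Pi.mul_apply] at h
  rw [← h]
  exact integral_congr_ae (.of_forall fun ω => by ring)

theorem integrable_mul_mul_mul (hZ : iIndepFun Z μ) (hmeas : ∀ i, Measurable (Z i))
    (hL2 : ∀ i, MemLp (Z i) 2 μ) {i i' j j' : ι} (hij : i ≠ j) (hij' : i ≠ j') (hi'j : i' ≠ j)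
    (hi'j' : i' ≠ j') :
    Integrable (fun ω => (Z i ω * Z j ω) * (Z i' ω * Z j' ω)) μ := by
  have h := (hZ.indepFun_mul_mul hmeas i i' j j' hij hij' hi'j hi'j').integrable_mul
    ((hL2 i).integrable_mul (hL2 i')) ((hL2 j).integrable_mul (hL2 j'))
  exact h.congr (.of_forall fun ω => by simp only [Pi.mul_apply]; ring)

end IndependentFamily

theorem condExp_mul_eq_zero_of_indep {Ω : Type*} {m m0 : MeasurableSpace Ω} {μ : Measure Ω}
    [IsFiniteMeasure μ] {X Y : Ω → ℝ} (hm : m ≤ m0) (hX : Measurable X) (hXint : Integrable X μ)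
    (hXm : Indep (MeasurableSpace.comap X inferInstance) m μ) (hmean : μ[X] = 0)
    (hY : StronglyMeasurable[m] Y) (hYX : Integrable (Y * X) μ) :
    μ[Y * X | m] =ᵐ[μ] 0 := by
  have hcondX : μ[X | m] =ᵐ[μ] fun _ => μ[X] :=
    condExp_indep_eq hX.comap_le hm (comap_measurable X).stronglyMeasurable hXm
  filter_upwards [condExp_mul_of_stronglyMeasurable_left hY hYX hXint, hcondX] with ω hω hωX
  simp [hω, hωX, hmean]

section Coordinates

variable {Ω τ κ : Type*} {a b : τ → κ → Ω → ℝ}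

def coords (a b : τ → κ → Ω → ℝ) (q : Bool × τ × κ) : Ω → ℝ :=
  if q.1 then a q.2.1 q.2.2 else b q.2.1 q.2.2

theorem forall_coords_iff {P : κ → (Ω → ℝ) → Prop} :
    (∀ q, P q.2.2 (coords a b q)) ↔ ∀ t k, P k (a t k) ∧ P k (b t k) := by
  refine ⟨fun h t k => ⟨h (true, t, k), h (false, t, k)⟩, ?_⟩
  rintro h ⟨_ | _, t, k⟩
  exacts [(h t k).2, (h t k).1]

def crossTerm (a b : τ → κ → Ω → ℝ) (p : τ × τ × κ) (ω : Ω) : ℝ :=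
  a p.1 p.2.2 ω * b p.2.1 p.2.2 ω

theorem crossTerm_eq_coords_mul (p : τ × τ × κ) (ω : Ω) :
    crossTerm a b p ω = coords a b (true, p.1, p.2.2) ω * coords a b (false, p.2.1, p.2.2) ω :=
  rfl

variable [MeasurableSpace Ω] {μ : Measure Ω}

theorem integral_crossTerm (hZ : iIndepFun (coords a b) μ) (hL2 : ∀ q, MemLp (coords a b q) 2 μ)
    (hmean : ∀ q, μ[coords a b q] = 0) (p : τ × τ × κ) :
    ∫ ω, crossTerm a b p ω ∂μ = 0 := by
  classical
  simp only [crossTerm_eq_coords_mul, integral_mul_eq_ite_variance hZ hL2 hmean,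
    Prod.mk.injEq, Bool.true_eq_false, false_and, if_false]

theorem integrable_crossTerm (hL2 : ∀ q, MemLp (coords a b q) 2 μ) (p : τ × τ × κ) :
    Integrable (crossTerm a b p) μ :=
  (hL2 (true, p.1, p.2.2)).integrable_mul (hL2 (false, p.2.1, p.2.2))

theorem integrable_crossTerm_mul (hZ : iIndepFun (coords a b) μ)
    (hmeas : ∀ q, Measurable (coords a b q)) (hL2 : ∀ q, MemLp (coords a b q) 2 μ)
    (p q : τ × τ × κ) :
    Integrable (fun ω => crossTerm a b p ω * crossTerm a b q ω) μ := by
  simp only [crossTerm_eq_coords_mul]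
  exact integrable_mul_mul_mul hZ hmeas hL2 (by simp) (by simp) (by simp) (by simp)

theorem integral_crossTerm_mul [DecidableEq τ] [DecidableEq κ] (hZ : iIndepFun (coords a b) μ)
    (hmeas : ∀ q, Measurable (coords a b q)) (hL2 : ∀ q, MemLp (coords a b q) 2 μ)
    (hmean : ∀ q, μ[coords a b q] = 0) {σsq : κ → ℝ}
    (hvar : ∀ q, variance (coords a b q) μ = σsq q.2.2) (p q : τ × τ × κ) :
    ∫ ω, crossTerm a b p ω * crossTerm a b q ω ∂μ = if p = q then σsq p.2.2 ^ 2 else 0 := by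
  obtain ⟨t, l, k⟩ := p
  obtain ⟨t', l', k'⟩ := q
  simp only [crossTerm_eq_coords_mul]
  rw [integral_mul_mul_mul_eq hZ hmeas (by simp) (by simp) (by simp) (by simp),
    integral_mul_eq_ite_variance hZ hL2 hmean, integral_mul_eq_ite_variance hZ hL2 hmean,
    hvar, hvar]
  by_cases hk : k = k' <;> by_cases ht : t = t' <;> by_cases hl : l = l' <;>
    simp [hk, ht, hl, sq]

theorem integral_sq_sum_crossTerm (hZ : iIndepFun (coords a b) μ)
    (hmeas : ∀ q, Measurable (coords a b q)) (hL2 : ∀ q, MemLp (coords a b q) 2 μ)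
    (hmean : ∀ q, μ[coords a b q] = 0) {σsq : κ → ℝ}
    (hvar : ∀ q, variance (coords a b q) μ = σsq q.2.2) (d : τ → τ → ℝ) (P : Finset (τ × τ × κ)) :
    ∫ ω, (∑ p ∈ P, d p.1 p.2.1 * crossTerm a b p ω) ^ 2 ∂μ
      = ∑ p ∈ P, d p.1 p.2.1 ^ 2 * σsq p.2.2 ^ 2 := by
  classical
  have hcross := integral_crossTerm_mul hZ hmeas hL2 hmean hvar
  rw [integral_sq_sum_of_pairwise_orthogonal (integrable_crossTerm_mul hZ hmeas hL2)
    fun p q hpq => (hcross p q).trans (if_neg hpq)]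
  refine Finset.sum_congr rfl fun p _ => ?_
  simp_rw [sq (crossTerm a b p _), hcross, if_pos]

end Coordinates

section Statistic

variable {Ω τ κ : Type*} [Fintype τ] [Fintype κ]

def cusumStat (d : τ → τ → ℝ) (a b : τ → κ → Ω → ℝ) (ω : Ω) : ℝ :=
  ∑ t, ∑ l, d t l * ∑ k, a t k ω * b l k ω

def cusumIncr (d : τ → τ → ℝ) (a b : τ → κ → Ω → ℝ) (t : τ) (ω : Ω) : ℝ :=
  ∑ k, a t k ω * ∑ l, d t l * b l k ω

variable (d : τ → τ → ℝ) (a b : τ → κ → Ω → ℝ)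

theorem cusumStat_eq_sum_cusumIncr (ω : Ω) : cusumStat d a b ω = ∑ t, cusumIncr d a b t ω := by
  refine Finset.sum_congr rfl fun t _ => ?_
  simp only [cusumIncr, Finset.mul_sum]
  rw [Finset.sum_comm]
  exact Finset.sum_congr rfl fun k _ => Finset.sum_congr rfl fun l _ => by ring

theorem cusumStat_eq_sum_crossTerm (ω : Ω) :
    cusumStat d a b ω = ∑ p, d p.1 p.2.1 * crossTerm a b p ω := by
  simp only [cusumStat, crossTerm, Fintype.sum_prod_type, Finset.mul_sum]

theorem cusumIncr_eq_sum_crossTerm (t : τ) (ω : Ω) :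
    cusumIncr d a b t ω = ∑ p ∈ {t} ×ˢ Finset.univ, d p.1 p.2.1 * crossTerm a b p ω := by
  rw [Finset.sum_product, Finset.sum_singleton, Fintype.sum_prod_type, Finset.sum_comm]
  simp only [cusumIncr, crossTerm, Finset.mul_sum]
  exact Finset.sum_congr rfl fun k _ => Finset.sum_congr rfl fun l _ => by ring

end Statistic

section Moments

variable {Ω τ κ : Type*} [Fintype τ] [Fintype κ] [MeasurableSpace Ω] {μ : Measure Ω}
  {a b : τ → κ → Ω → ℝ} (d : τ → τ → ℝ)

theorem integrable_cusumStat (hL2 : ∀ q, MemLp (coords a b q) 2 μ) :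
    Integrable (cusumStat d a b) μ := by
  simp_rw [funext (cusumStat_eq_sum_crossTerm d a b)]
  exact integrable_finsetSum _ fun p _ => (integrable_crossTerm hL2 p).const_mul _

theorem integral_cusumStat (hZ : iIndepFun (coords a b) μ)
    (hL2 : ∀ q, MemLp (coords a b q) 2 μ) (hmean : ∀ q, μ[coords a b q] = 0) :
    ∫ ω, cusumStat d a b ω ∂μ = 0 := by
  simp_rw [cusumStat_eq_sum_crossTerm]
  rw [integral_finsetSum _ fun p _ => (integrable_crossTerm hL2 p).const_mul _]
  simp [integral_const_mul, integral_crossTerm hZ hL2 hmean]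

theorem variance_cusumStat (hZ : iIndepFun (coords a b) μ)
    (hmeas : ∀ q, Measurable (coords a b q)) (hL2 : ∀ q, MemLp (coords a b q) 2 μ)
    (hmean : ∀ q, μ[coords a b q] = 0) {σsq : κ → ℝ}
    (hvar : ∀ q, variance (coords a b q) μ = σsq q.2.2) :
    variance (cusumStat d a b) μ = (∑ t, ∑ l, d t l ^ 2) * ∑ k, σsq k ^ 2 := by
  rw [variance_of_integral_eq_zero (integrable_cusumStat d hL2).aemeasurable
    (integral_cusumStat d hZ hL2 hmean)]
  simp_rw [cusumStat_eq_sum_crossTerm]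
  rw [integral_sq_sum_crossTerm hZ hmeas hL2 hmean hvar d, Finset.sum_mul]
  simp only [Fintype.sum_prod_type, Finset.sum_mul_sum]

theorem integral_cusumIncr_sq (hZ : iIndepFun (coords a b) μ)
    (hmeas : ∀ q, Measurable (coords a b q)) (hL2 : ∀ q, MemLp (coords a b q) 2 μ)
    (hmean : ∀ q, μ[coords a b q] = 0) {σsq : κ → ℝ}
    (hvar : ∀ q, variance (coords a b q) μ = σsq q.2.2) (t : τ) :
    ∫ ω, cusumIncr d a b t ω ^ 2 ∂μ = (∑ l, d t l ^ 2) * ∑ k, σsq k ^ 2 := by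
  simp_rw [cusumIncr_eq_sum_crossTerm]
  rw [integral_sq_sum_crossTerm hZ hmeas hL2 hmean hvar d, Finset.sum_product,
    Finset.sum_singleton, Fintype.sum_prod_type, Finset.sum_mul_sum]

end Moments

theorem comap_pi_le_iff {Ω ι : Type*} {X : ι → Type*} [∀ i, MeasurableSpace (X i)]
    {m : MeasurableSpace Ω} {f : Ω → ∀ i, X i} :
    MeasurableSpace.comap f MeasurableSpace.pi ≤ m ↔ ∀ i, Measurable fun ω => f ω i :=
  measurable_iff_comap_le.symm.trans measurable_pi_iff

section Filtration

variable {Ω : Type*} {N T : ℕ} {a b : Fin T → Fin N → Ω → ℝ}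

theorem measurable_filtrF_b (j : ℕ) (l : Fin T) (k : Fin N) :
    Measurable[filtrF N T a b j] (b l k) :=
  comap_pi_le_iff.1 (le_sup_of_le_left (le_iSup (fun l =>
    MeasurableSpace.comap (fun ω k => b l k ω) MeasurableSpace.pi) l)) k

theorem filtrF_le_iSup_comap_coords (j : ℕ) :
    filtrF N T a b j ≤ ⨆ q ∈ {q : Bool × Fin T × Fin N | q.1 = false ∨ (q.2.1 : ℕ) < j},
      MeasurableSpace.comap (coords a b q) inferInstance := by
  have hcoord : ∀ q ∈ {q : Bool × Fin T × Fin N | q.1 = false ∨ (q.2.1 : ℕ) < j},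
      MeasurableSpace.comap (coords a b q) inferInstance ≤
        ⨆ q ∈ {q : Bool × Fin T × Fin N | q.1 = false ∨ (q.2.1 : ℕ) < j},
          MeasurableSpace.comap (coords a b q) inferInstance :=
    fun q hq => le_biSup (fun q => MeasurableSpace.comap (coords a b q) _) hq
  refine sup_le (iSup_le fun l => ?_) (iSup₂_le fun s hs => ?_)
  · exact comap_pi_le_iff.2 fun k => Measurable.of_comap_le (hcoord (false, l, k) (Or.inl rfl))
  · exact comap_pi_le_iff.2 fun k => Measurable.of_comap_le (hcoord (true, s, k) (Or.inr hs))

theorem filtrF_le [m0 : MeasurableSpace Ω] (hmeas : ∀ q, Measurable (coords a b q)) (j : ℕ) :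
    filtrF N T a b j ≤ m0 :=
  sup_le (iSup_le fun l => comap_pi_le_iff.2 fun k => hmeas (false, l, k))
    (iSup₂_le fun s _ => comap_pi_le_iff.2 fun k => hmeas (true, s, k))

variable [MeasurableSpace Ω] {μ : Measure Ω}

theorem indep_comap_a_filtrF (hZ : iIndepFun (coords a b) μ)
    (hmeas : ∀ q, Measurable (coords a b q)) (t : Fin T) (k : Fin N) :
    Indep (MeasurableSpace.comap (a t k) inferInstance) (filtrF N T a b t) μ := by
  have hdisj : Disjoint ({(true, t, k)} : Set (Bool × Fin T × Fin N))
      {q | q.1 = false ∨ (q.2.1 : ℕ) < t} := by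
    simp
  refine indep_of_indep_of_le_right (indep_of_indep_of_le_left
    (indep_iSup_of_disjoint (fun q => (hmeas q).comap_le) hZ.iIndep hdisj) ?_)
    (filtrF_le_iSup_comap_coords t)
  exact le_biSup (fun q => MeasurableSpace.comap (coords a b q) _) (Set.mem_singleton (true, t, k))

theorem condExp_cusumIncr_filtrF [IsFiniteMeasure μ] (d : Fin T → Fin T → ℝ)
    (hZ : iIndepFun (coords a b) μ) (hmeas : ∀ q, Measurable (coords a b q))
    (hL2 : ∀ q, MemLp (coords a b q) 2 μ) (hmean : ∀ q, μ[coords a b q] = 0) (t : Fin T) :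
    μ[cusumIncr d a b t | filtrF N T a b t] =ᵐ[μ] 0 := by
  set S : Fin N → Ω → ℝ := fun k ω => ∑ l, d t l * b l k ω
  have hS : ∀ k, StronglyMeasurable[filtrF N T a b t] (S k) := fun k =>
    (Finset.measurable_sum _ fun l _ =>
      (measurable_filtrF_b (t : ℕ) l k).const_mul _).stronglyMeasurable
  have hint : ∀ k, Integrable (S k * a t k) μ := fun k =>
    (memLp_finsetSum _ fun l _ => (hL2 (false, l, k)).const_mul _).integrable_mul
      (hL2 (true, t, k))
  have hterm : ∀ k, μ[S k * a t k | filtrF N T a b t] =ᵐ[μ] 0 := fun k =>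
    condExp_mul_eq_zero_of_indep (filtrF_le hmeas t) (hmeas (true, t, k))
      ((hL2 (true, t, k)).integrable one_le_two) (indep_comap_a_filtrF hZ hmeas t k)
      (hmean (true, t, k)) (hS k) (hint k)
  have hincr : cusumIncr d a b t = ∑ k, S k * a t k := by
    ext ω
    simp only [cusumIncr, Finset.sum_apply, Pi.mul_apply, S, mul_comm]
  rw [hincr]
  filter_upwards [condExp_finsetSum (s := Finset.univ) (fun k _ => hint k) (filtrF N T a b t),
    ae_all_iff.2 hterm] with ω hsum hzero
  simp [hsum, Finset.sum_apply, hzero]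

theorem sum_integral_condExp_cusumIncr_sq [IsFiniteMeasure μ] (d : Fin T → Fin T → ℝ)
    (hZ : iIndepFun (coords a b) μ) (hmeas : ∀ q, Measurable (coords a b q))
    (hL2 : ∀ q, MemLp (coords a b q) 2 μ) (hmean : ∀ q, μ[coords a b q] = 0) {σsq : Fin N → ℝ}
    (hvar : ∀ q, variance (coords a b q) μ = σsq q.2.2) :
    ∑ t : Fin T, ∫ ω, μ[fun ω' => cusumIncr d a b t ω' ^ 2 | filtrF N T a b t] ω ∂μ
      = variance (cusumStat d a b) μ := by
  simp_rw [integral_condExp (filtrF_le hmeas _),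
    integral_cusumIncr_sq d hZ hmeas hL2 hmean hvar, ← Finset.sum_mul]
  exact (variance_cusumStat d hZ hmeas hL2 hmean hvar).symm

end Filtration

theorem bilinear_cusum_martingale_general
    {Ω : Type*} [m0 : MeasurableSpace Ω] (μ : Measure Ω) [IsProbabilityMeasure μ]
    (N T : ℕ)
    (d : Fin T → Fin T → ℝ) (σsq : Fin N → ℝ)
    (a b : Fin T → Fin N → Ω → ℝ)
    (hmeas : ∀ t k, Measurable (a t k) ∧ Measurable (b t k))
    (hindep : iIndepFun
      (fun q : Bool × Fin T × Fin N =>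
        if q.1 then a q.2.1 q.2.2 else b q.2.1 q.2.2) μ)
    (hL2 : ∀ t k, MemLp (a t k) 2 μ ∧ MemLp (b t k) 2 μ)
    (hmean : ∀ t k, (∫ ω, a t k ω ∂μ = 0) ∧ (∫ ω, b t k ω ∂μ = 0))
    (hvar : ∀ t k, variance (a t k) μ = σsq k ∧ variance (b t k) μ = σsq k) :
    (∫ ω, (∑ t, ∑ l, d t l * ∑ k, a t k ω * b l k ω) ∂μ = 0) ∧
    (∀ ω, (∑ t, ∑ l, d t l * ∑ k, a t k ω * b l k ω)
        = ∑ t, ∑ k, a t k ω * ∑ l, d t l * b l k ω) ∧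
    (∀ t : Fin T,
      μ[fun ω => ∑ k, a t k ω * ∑ l, d t l * b l k ω | filtrF N T a b t.val]
        =ᵐ[μ] 0) ∧
    (variance (fun ω => ∑ t, ∑ l, d t l * ∑ k, a t k ω * b l k ω) μ
        = (∑ t, ∑ l, (d t l) ^ 2) * ∑ k, (σsq k) ^ 2) ∧
    (∑ t : Fin T,
        ∫ ω, (μ[fun ω' => (∑ k, a t k ω' * ∑ l, d t l * b l k ω') ^ 2 |
          filtrF N T a b t.val]) ω ∂μ
      = variance (fun ω => ∑ t, ∑ l, d t l * ∑ k, a t k ω * b l k ω) μ) := by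
  have hZ : iIndepFun (coords a b) μ := hindep
  have hmeas' : ∀ q, Measurable (coords a b q) :=
    (forall_coords_iff (P := fun _ f => Measurable f)).2 hmeas
  have hL2' : ∀ q, MemLp (coords a b q) 2 μ :=
    (forall_coords_iff (P := fun _ f => MemLp f 2 μ)).2 hL2
  have hmean' : ∀ q, μ[coords a b q] = 0 :=
    (forall_coords_iff (P := fun _ f => ∫ ω, f ω ∂μ = 0)).2 hmean
  have hvar' : ∀ q, variance (coords a b q) μ = σsq q.2.2 :=
    (forall_coords_iff (P := fun k f => variance f μ = σsq k)).2 hvar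
  exact ⟨integral_cusumStat d hZ hL2' hmean', cusumStat_eq_sum_cusumIncr d a b,
    condExp_cusumIncr_filtrF d hZ hmeas' hL2' hmean',
    variance_cusumStat d hZ hmeas' hL2' hmean' hvar',
    sum_integral_condExp_cusumIncr_sq d hZ hmeas' hL2' hmean' hvar'⟩

/-- **Martingale structure and exact variance of the bilinear CUSUM statistic**
(Part I of the proof of Lemma B.5).  With all `2NT` coordinates of the random vectors
`a⁽ᵗ⁾, b⁽ᵗ⁾ ∈ ℝᴺ` jointly independent, mean zero, square integrable, and
`Var(a⁽ᵗ⁾_k) = Var(b⁽ᵗ⁾_k) = σ_k²`: setting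
`Υ = ∑_{t,l} d_{t,l} (a⁽ᵗ⁾)ᵀ b⁽ˡ⁾` and `v_t = (a⁽ᵗ⁾)ᵀ (∑_l d_{t,l} b⁽ˡ⁾)`,
(1) `E Υ = 0`; (2) `Υ = ∑_t v_t` and `E(v_t | F_{t-1}) = 0`;
(3) `Var Υ = (∑_{t,l} d_{t,l}²)(∑_k σ_k⁴)`; (4) `∑_t E[E(v_t² | F_{t-1})] = Var Υ`. -/
theorem bilinear_cusum_martingale
    {Ω : Type*} [m0 : MeasurableSpace Ω] (μ : Measure Ω) [IsProbabilityMeasure μ]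
    (N T : ℕ) (hN : 1 ≤ N) (hT : 1 ≤ T)
    (d : Fin T → Fin T → ℝ) (σsq : Fin N → ℝ)
    (a b : Fin T → Fin N → Ω → ℝ)
    (hmeas : ∀ t k, Measurable (a t k) ∧ Measurable (b t k))
    (hindep : iIndepFun
      (fun q : Bool × Fin T × Fin N =>
        if q.1 then a q.2.1 q.2.2 else b q.2.1 q.2.2) μ)
    (hL2 : ∀ t k, MemLp (a t k) 2 μ ∧ MemLp (b t k) 2 μ)
    (hmean : ∀ t k, (∫ ω, a t k ω ∂μ = 0) ∧ (∫ ω, b t k ω ∂μ = 0))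
    (hvar : ∀ t k, variance (a t k) μ = σsq k ∧ variance (b t k) μ = σsq k) :
    (∫ ω, (∑ t, ∑ l, d t l * ∑ k, a t k ω * b l k ω) ∂μ = 0) ∧
    (∀ ω, (∑ t, ∑ l, d t l * ∑ k, a t k ω * b l k ω)
        = ∑ t, ∑ k, a t k ω * ∑ l, d t l * b l k ω) ∧
    (∀ t : Fin T,
      μ[fun ω => ∑ k, a t k ω * ∑ l, d t l * b l k ω | filtrF N T a b t.val]
        =ᵐ[μ] 0) ∧
    (variance (fun ω => ∑ t, ∑ l, d t l * ∑ k, a t k ω * b l k ω) μ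
        = (∑ t, ∑ l, (d t l) ^ 2) * ∑ k, (σsq k) ^ 2) ∧
    (∑ t : Fin T,
        ∫ ω, (μ[fun ω' => (∑ k, a t k ω' * ∑ l, d t l * b l k ω') ^ 2 |
          filtrF N T a b t.val]) ω ∂μ
      = variance (fun ω => ∑ t, ∑ l, d t l * ∑ k, a t k ω * b l k ω) μ) :=
  bilinear_cusum_martingale_general (m0 := m0) μ N T d σsq a b hmeas hindep hL2 hmean hvar

end MosaicStmt15
end

section
/- Variance bound for weighted bilinear forms of a symmetric noise matrix (Lemma D.5 part 1, with explicit constant). Let n >= 1 and let W = (w_{i,l}) be an n x n symmetric random matrix with zero diagonal whose upper-triangular entries are jointly independent, mean zero, with Var(w_{i,l}) <= 1/n. Let b_1, ..., b_n in R^n be deterministic vectors with ||b_j||_infty <= 1/n for every j. Then for every subset S of [n] x [n] and every family of real coefficients (theta_{i,j})_{(i,j) in S}: Var( sum_{(i,j) in S} theta_{i,j} e_i^T W b_j ) <= (2/n) sum_{(i,j) in S} theta_{i,j}^2. -/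
/-!
Extend `θ` by zero to a matrix `Θ` and put `A = Θ b`, so that the random variable is
`∑_{i,l} A_il w_il`. Symmetry and the zero diagonal turn this into `∑_{i<l} (A_il + A_li) w_il`,
a combination of independent entries, whose variance is at most
`(1/n) ∑_{i<l} (A_il + A_li)² ≤ (2/n) ‖A‖_F²`. Finally `‖Θ b‖_F ≤ ‖Θ‖_F ‖b‖_F` with
`‖b‖_F² ≤ n² (1/n)² ≤ 1` and `‖Θ‖_F² = ∑_{p ∈ S} θ_p²`.
-/

open MeasureTheory ProbabilityTheory Finset

theorem Fintype.sum_sum_eq_sum_lt_add_sum_diag {ι M : Type*} [Fintype ι] [LinearOrder ι]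
    [AddCommMonoid M] (f : ι → ι → M) :
    ∑ i, ∑ j, f i j
      = ∑ e : {q : ι × ι // q.1 < q.2}, (f e.1.1 e.1.2 + f e.1.2 e.1.1) + ∑ i, f i i := by
  classical
  have hswap : ∑ q ∈ univ.filter (fun q : ι × ι => q.2 < q.1), f q.1 q.2
      = ∑ q ∈ univ.filter (fun q : ι × ι => q.1 < q.2), f q.2 q.1 :=
    Finset.sum_nbij' Prod.swap Prod.swap (by simp) (by simp) (by simp) (by simp) (by simp)
  have hdiag : ∑ q ∈ univ.filter (fun q : ι × ι => q.1 = q.2), f q.1 q.2 = ∑ i, f i i :=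
    Finset.sum_nbij' Prod.fst (fun i => (i, i)) (by simp) (by simp) (by aesop) (by simp)
      (by aesop)
  have hrest : ∑ q ∈ univ.filter (fun q : ι × ι => ¬q.1 < q.2), f q.1 q.2
      = ∑ q ∈ univ.filter (fun q : ι × ι => q.2 < q.1), f q.1 q.2
        + ∑ q ∈ univ.filter (fun q : ι × ι => q.1 = q.2), f q.1 q.2 := by
    rw [← Finset.sum_filter_add_sum_filter_not _ (fun q : ι × ι => q.2 < q.1),
      Finset.filter_filter, Finset.filter_filter]
    congr 2 <;> ext q <;> simp only [mem_filter, mem_univ, true_and] <;> grind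
  rw [← Fintype.sum_prod_type', ← Finset.sum_filter_add_sum_filter_not univ
      (fun q : ι × ι => q.1 < q.2), hrest, hswap, hdiag,
    ← Finset.sum_subtype (univ.filter fun q : ι × ι => q.1 < q.2) (by simp)
      (fun q : ι × ι => f q.1 q.2 + f q.2 q.1),
    Finset.sum_add_distrib, add_assoc]

theorem Matrix.sum_mul_eq_sum_lt_of_isSymm {ι R : Type*} [Fintype ι] [LinearOrder ι]
    [CommSemiring R] (A M : Matrix ι ι R) (hM : M.IsSymm) (hdiag : ∀ i, M i i = 0) :
    ∑ i, ∑ j, A i j * M i j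
      = ∑ e : {q : ι × ι // q.1 < q.2}, (A e.1.1 e.1.2 + A e.1.2 e.1.1) * M e.1.1 e.1.2 := by
  simp only [Fintype.sum_sum_eq_sum_lt_add_sum_diag, hdiag, mul_zero, sum_const_zero, add_zero,
    add_mul, hM.apply]

theorem sum_lt_sq_add_swap_le_two_mul {ι : Type*} [Fintype ι] [LinearOrder ι] (A : ι → ι → ℝ) :
    ∑ e : {q : ι × ι // q.1 < q.2}, (A e.1.1 e.1.2 + A e.1.2 e.1.1) ^ 2
      ≤ 2 * ∑ i, ∑ j, A i j ^ 2 := by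
  rw [Fintype.sum_sum_eq_sum_lt_add_sum_diag, mul_add, Finset.mul_sum]
  refine le_add_of_le_of_nonneg (Finset.sum_le_sum fun e _ => ?_) (by positivity)
  nlinarith [sq_nonneg (A e.1.1 e.1.2 - A e.1.2 e.1.1)]

theorem ProbabilityTheory.iIndepFun.variance_sum_const_mul_le {Ω ι : Type*}
    [MeasurableSpace Ω] {μ : Measure Ω} {X : ι → Ω → ℝ} (hindep : iIndepFun X μ)
    (hX : ∀ k, MemLp (X k) 2 μ) {v : ℝ}
    (hvar : ∀ k, variance (X k) μ ≤ v) (s : Finset ι) (c : ι → ℝ) :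
    variance (fun ω => ∑ k ∈ s, c k * X k ω) μ ≤ v * ∑ k ∈ s, c k ^ 2 := by
  have hsum : (fun ω => ∑ k ∈ s, c k * X k ω) = ∑ k ∈ s, fun ω => c k * X k ω := by
    ext ω; simp
  rw [hsum, IndepFun.variance_sum (fun k _ => (hX k).const_mul _)
    fun k _ l _ hkl => (hindep.indepFun hkl).comp (measurable_const_mul _)
      (measurable_const_mul _), Finset.mul_sum]
  refine Finset.sum_le_sum fun k _ => ?_
  rw [variance_const_mul, mul_comm v]
  exact mul_le_mul_of_nonneg_left (hvar k) (sq_nonneg _)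

def coeffMatrix {ι R : Type*} [DecidableEq ι] [Zero R] (S : Finset (ι × ι)) (θ : ι × ι → R) :
    Matrix ι ι R :=
  Matrix.of fun i j => if (i, j) ∈ S then θ (i, j) else 0

theorem sum_mul_sum_mul_eq_sum_coeffMatrix_mul {ι R : Type*} [Fintype ι] [DecidableEq ι]
    [CommSemiring R] (S : Finset (ι × ι)) (θ : ι × ι → R) (M : Matrix ι ι R) (b : ι → ι → R) :
    ∑ p ∈ S, θ p * ∑ l, M p.1 l * b p.2 l
      = ∑ i, ∑ l, (coeffMatrix S θ * Matrix.of b) i l * M i l := by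
  calc ∑ p ∈ S, θ p * ∑ l, M p.1 l * b p.2 l
      = ∑ i, ∑ j, coeffMatrix S θ i j * ∑ l, M i l * b j l := by
        simp [coeffMatrix, ← Fintype.sum_prod_type', ite_mul, Finset.sum_ite_mem]
    _ = _ := by
        simp only [Matrix.mul_apply, Matrix.of_apply, Finset.mul_sum, Finset.sum_mul]
        refine Finset.sum_congr rfl fun i _ => Finset.sum_comm.trans ?_
        exact Finset.sum_congr rfl fun l _ => Finset.sum_congr rfl fun j _ => by ring

theorem sum_sum_coeffMatrix_sq {ι : Type*} [Fintype ι] [DecidableEq ι] (S : Finset (ι × ι))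
    (θ : ι × ι → ℝ) : ∑ i, ∑ j, coeffMatrix S θ i j ^ 2 = ∑ p ∈ S, θ p ^ 2 := by
  simp [coeffMatrix, ← Fintype.sum_prod_type', ite_pow, Finset.sum_ite_mem]

theorem Matrix.sum_sum_mul_apply_sq_le {ι κ ν : Type*} [Fintype ι] [Fintype κ] [Fintype ν]
    (A : Matrix ι κ ℝ) (B : Matrix κ ν ℝ) :
    ∑ i, ∑ l, (A * B) i l ^ 2 ≤ (∑ i, ∑ j, A i j ^ 2) * ∑ j, ∑ l, B j l ^ 2 := by
  rw [Finset.sum_mul]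
  refine Finset.sum_le_sum fun i _ => ?_
  rw [Finset.sum_comm (f := fun j l => B j l ^ 2), Finset.mul_sum]
  exact Finset.sum_le_sum fun l _ => Finset.sum_mul_sq_le_sq_mul_sq _ _ _

theorem variance_sum_sum_mul_le_of_isSymm {Ω ι : Type*} [MeasurableSpace Ω] {μ : Measure Ω}
    [Fintype ι] [LinearOrder ι] {W : Ω → Matrix ι ι ℝ} (hsymm : ∀ ω, (W ω).IsSymm)
    (hdiag : ∀ ω i, W ω i i = 0)
    (hindep : iIndepFun (fun e : {q : ι × ι // q.1 < q.2} => fun ω => W ω e.1.1 e.1.2) μ)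
    (hL2 : ∀ i j, MemLp (fun ω => W ω i j) 2 μ) {v : ℝ}
    (hvar : ∀ i j, variance (fun ω => W ω i j) μ ≤ v) (hv : 0 ≤ v) (A : Matrix ι ι ℝ) :
    variance (fun ω => ∑ i, ∑ j, A i j * W ω i j) μ ≤ 2 * v * ∑ i, ∑ j, A i j ^ 2 := by
  simp only [Matrix.sum_mul_eq_sum_lt_of_isSymm A _ (hsymm _) (hdiag _)]
  calc _ ≤ v * ∑ e : {q : ι × ι // q.1 < q.2}, (A e.1.1 e.1.2 + A e.1.2 e.1.1) ^ 2 :=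
        hindep.variance_sum_const_mul_le (fun e => hL2 _ _) (fun e => hvar _ _) univ _
    _ ≤ v * (2 * ∑ i, ∑ j, A i j ^ 2) := by gcongr; exact sum_lt_sq_add_swap_le_two_mul A
    _ = _ := by ring

theorem variance_weighted_bilinear_general
    {Ω : Type*} [MeasurableSpace Ω] (μ : Measure Ω)
    (n : ℕ) (W : Ω → Matrix (Fin n) (Fin n) ℝ)
    (hsymm : ∀ ω, (W ω).IsSymm) (hdiag : ∀ ω i, W ω i i = 0)
    (hindep : iIndepFun
      (fun e : {p : Fin n × Fin n // p.1 < p.2} => fun ω => W ω e.1.1 e.1.2) μ)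
    (hL2 : ∀ i j, MemLp (fun ω => W ω i j) 2 μ)
    (hvar : ∀ i j, variance (fun ω => W ω i j) μ ≤ 1 / n)
    (b : Fin n → Fin n → ℝ) (hb : ∀ j l, |b j l| ≤ 1 / n)
    (S : Finset (Fin n × Fin n)) (θ : Fin n × Fin n → ℝ) :
    variance (fun ω => ∑ p ∈ S, θ p * ∑ l, W ω p.1 l * b p.2 l) μ
      ≤ 2 / n * ∑ p ∈ S, (θ p) ^ 2 := by
  have hb_sq : ∑ j, ∑ l, b j l ^ 2 ≤ 1 :=
    calc ∑ j, ∑ l, b j l ^ 2 ≤ ∑ _j : Fin n, ∑ _l : Fin n, (1 / n : ℝ) ^ 2 :=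
          sum_le_sum fun j _ => sum_le_sum fun l _ =>
            sq_le_sq' (abs_le.1 (hb j l)).1 (abs_le.1 (hb j l)).2
      _ ≤ 1 := by
          rcases n.eq_zero_or_pos with rfl | hn
          · simp
          · simp only [sum_const, card_univ, Fintype.card_fin, nsmul_eq_mul]
            field_simp
            rfl
  rw [funext fun ω => sum_mul_sum_mul_eq_sum_coeffMatrix_mul S θ (W ω) b]
  calc _ ≤ 2 * (1 / n : ℝ) * ∑ i, ∑ l, (coeffMatrix S θ * Matrix.of b) i l ^ 2 :=
        variance_sum_sum_mul_le_of_isSymm hsymm hdiag hindep hL2 hvar (by positivity) _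
    _ ≤ 2 * (1 / n : ℝ) * ((∑ i, ∑ j, coeffMatrix S θ i j ^ 2) * 1) := by
        gcongr
        exact (Matrix.sum_sum_mul_apply_sq_le _ _).trans
          (mul_le_mul_of_nonneg_left hb_sq (by positivity))
    _ = _ := by rw [sum_sum_coeffMatrix_sq]; ring

/-- **Variance bound for weighted bilinear forms of a symmetric noise matrix**
(Lemma D.5, part 1, with explicit constant).  Let `W` be a random symmetric `n × n` matrix
with zero diagonal, jointly independent mean-zero upper-triangular entries with
`Var(w_{i,l}) ≤ 1/n`, and let `b₁,…,bₙ` be deterministic vectors with `‖b_j‖_∞ ≤ 1/n`.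
Then for every `S ⊆ [n] × [n]` and coefficients `θ`:
`Var(∑_{(i,j) ∈ S} θ_{i,j} eᵢᵀ W b_j) ≤ (2/n) ∑_{(i,j) ∈ S} θ_{i,j}²`. -/
theorem variance_weighted_bilinear
    {Ω : Type*} [MeasurableSpace Ω] (μ : Measure Ω) [IsProbabilityMeasure μ]
    (n : ℕ) (hn : 1 ≤ n) (W : Ω → Matrix (Fin n) (Fin n) ℝ)
    (hsymm : ∀ ω, (W ω).IsSymm) (hdiag : ∀ ω i, W ω i i = 0)
    (hmeas : ∀ i j, Measurable fun ω => W ω i j)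
    (hindep : iIndepFun
      (fun e : {p : Fin n × Fin n // p.1 < p.2} => fun ω => W ω e.1.1 e.1.2) μ)
    (hmean : ∀ i j, ∫ ω, W ω i j ∂μ = 0)
    (hL2 : ∀ i j, MemLp (fun ω => W ω i j) 2 μ)
    (hvar : ∀ i j, variance (fun ω => W ω i j) μ ≤ 1 / n)
    (b : Fin n → Fin n → ℝ) (hb : ∀ j l, |b j l| ≤ 1 / n)
    (S : Finset (Fin n × Fin n)) (θ : Fin n × Fin n → ℝ) :
    variance (fun ω => ∑ p ∈ S, θ p * ∑ l, W ω p.1 l * b p.2 l) μ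
      ≤ 2 / n * ∑ p ∈ S, (θ p) ^ 2 :=
  variance_weighted_bilinear_general μ n W hsymm hdiag hindep hL2 hvar b hb S θ
end

section
/- Variance bound for products of bilinear forms of two independent noise matrices (Lemma D.5 part 2, with explicit constant). Let n >= 2 and let W = (w_{i,l}) and W' = (w'_{i,l}) be two independent n x n symmetric random matrices with zero diagonal, each with jointly independent, mean-zero upper-triangular entries satisfying Var(w_{i,l}) <= 1/n and Var(w'_{i,l}) <= 1/n. Let b_1, ..., b_n in R^n be deterministic vectors with ||b_j||_infty <= 1/n for every j. Then for every subset S of [n] x [n]: Var( sum_{(i,j) in S} ( e_i^T W b_j )( e_i^T W' b_j ) ) <= 3 |S| / n^3. -/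
/-!
Bound the variance by the second moment. Writing `Y_p = eᵢᵀ W b_j` and `Z_p = eᵢᵀ W' b_j` for
`p = (i, j)`, independence of `W` and `W'` gives `E X² = ∑_{p,q ∈ S} E[Y_p Y_q] E[Z_p Z_q]`.
Expanding the bilinear forms, `E[w_{il} w_{i'l'}]` vanishes unless `{i, l} = {i', l'}`, so
`|E[Y_p Y_q]| ≤ n · n⁻¹ · n⁻²` when `p` and `q` lie in the same row `i`, and `≤ n⁻³` otherwise.
Each `p ∈ S` therefore contributes at most `n · n⁻⁴ + n² · n⁻⁶ ≤ 2 n⁻³`.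
-/

open MeasureTheory ProbabilityTheory

section UpperTriangle

variable {ι α : Type*} [LinearOrder ι]

def upperIndex {i l : ι} (h : i ≠ l) : {p : ι × ι // p.1 < p.2} :=
  ⟨(i ⊓ l, i ⊔ l), inf_lt_sup.2 h⟩

theorem upperIndex_eq_upperIndex_iff {i l i' l' : ι} (h : i ≠ l) (h' : i' ≠ l') :
    upperIndex h = upperIndex h' ↔ s(i, l) = s(i', l') := by
  rw [← Sym2.inf_eq_inf_and_sup_eq_sup]
  simp [upperIndex, Subtype.ext_iff]

theorem Matrix.IsSymm.apply_upperIndex {M : Matrix ι ι α} (hM : M.IsSymm) {i l : ι}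
    (h : i ≠ l) : M (upperIndex h).1.1 (upperIndex h).1.2 = M i l := by
  rcases le_total i l with hil | hil
  · simp [upperIndex, hil]
  · simp [upperIndex, hil, hM.apply l i]

def Matrix.symmOfUpper [Zero α] (u : {p : ι × ι // p.1 < p.2} → α) : Matrix ι ι α :=
  Matrix.of fun i l => if h : i = l then 0 else u (upperIndex h)

theorem Matrix.symmOfUpper_upper [Zero α] {M : Matrix ι ι α} (hM : M.IsSymm)
    (hdiag : ∀ i, M i i = 0) : symmOfUpper (fun q => M q.1.1 q.1.2) = M := by
  ext i l
  by_cases h : i = l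
  · simp [symmOfUpper, h, hdiag]
  · simp [symmOfUpper, h, hM.apply_upperIndex]

theorem measurable_symmOfUpper_apply [Zero α] [MeasurableSpace α] (i l : ι) :
    Measurable fun u : {p : ι × ι // p.1 < p.2} → α => Matrix.symmOfUpper u i l := by
  by_cases h : i = l
  · simp [Matrix.symmOfUpper, h]
  · simpa [Matrix.symmOfUpper, h] using measurable_pi_apply _

end UpperTriangle

theorem ProbabilityTheory.iIndepFun.indepFun_false_true {Ω κ β : Type*} [MeasurableSpace Ω]
    {μ : Measure Ω} [Fintype κ] [MeasurableSpace β] {f : κ × Bool → Ω → β}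
    (hf : iIndepFun f μ) (hmeas : ∀ q, AEMeasurable (f q) μ) :
    IndepFun (fun ω k => f (k, false) ω) (fun ω k => f (k, true) ω) μ := by
  classical
  have hST : Disjoint (Finset.univ.filter fun q : κ × Bool => q.2 = false)
      (Finset.univ.filter fun q => q.2 = true) := by
    simp [Finset.disjoint_filter]
  exact (hf.indepFun_finset₀ _ _ hST hmeas).comp
    (φ := fun v k => v ⟨(k, false), by simp⟩) (ψ := fun v k => v ⟨(k, true), by simp⟩)
    (measurable_pi_lambda _ fun _ => measurable_pi_apply _)
    (measurable_pi_lambda _ fun _ => measurable_pi_apply _)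

theorem MeasureTheory.integral_sum_mul_sum {Ω κ κ' : Type*} [MeasurableSpace Ω] {μ : Measure Ω}
    (s : Finset κ) (t : Finset κ') {f : κ → Ω → ℝ} {g : κ' → Ω → ℝ}
    (hfg : ∀ k k', Integrable (fun ω => f k ω * g k' ω) μ) :
    ∫ ω, (∑ k ∈ s, f k ω) * (∑ k' ∈ t, g k' ω) ∂μ = ∑ k ∈ s, ∑ k' ∈ t, ∫ ω, f k ω * g k' ω ∂μ := by
  simp_rw [Finset.sum_mul_sum]
  rw [integral_finsetSum _ fun k _ => integrable_finsetSum _ fun k' _ => hfg k k']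
  exact Finset.sum_congr rfl fun k _ => integral_finsetSum _ fun k' _ => hfg k k'

section NoiseMatrix

variable {Ω ι : Type*} [MeasurableSpace Ω] [LinearOrder ι]

structure IsNoiseMatrix (μ : Measure Ω) (M : Ω → Matrix ι ι ℝ) (v : ℝ) : Prop where
  isSymm : ∀ ω, (M ω).IsSymm
  diag_eq_zero : ∀ ω i, M ω i i = 0
  indepFun_upper : Pairwise fun q q' : {p : ι × ι // p.1 < p.2} =>
    IndepFun (fun ω => M ω q.1.1 q.1.2) (fun ω => M ω q'.1.1 q'.1.2) μ
  integral_eq_zero : ∀ i l, ∫ ω, M ω i l ∂μ = 0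
  memLp : ∀ i l, MemLp (fun ω => M ω i l) 2 μ
  variance_le : ∀ i l, variance (fun ω => M ω i l) μ ≤ v

namespace IsNoiseMatrix

variable {μ : Measure Ω} {M : Ω → Matrix ι ι ℝ} {v : ℝ}

theorem integrable_mul (hM : IsNoiseMatrix μ M v) (i l i' l' : ι) :
    Integrable (fun ω => M ω i l * M ω i' l') μ :=
  (hM.memLp i l).integrable_mul (hM.memLp i' l')

theorem integral_mul_eq_zero (hM : IsNoiseMatrix μ M v) {i l i' l' : ι}
    (hne : s(i, l) ≠ s(i', l')) : ∫ ω, M ω i l * M ω i' l' ∂μ = 0 := by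
  by_cases h : i = l
  · simp [h, hM.diag_eq_zero]
  by_cases h' : i' = l'
  · simp [h', hM.diag_eq_zero]
  have hindep := hM.indepFun_upper ((upperIndex_eq_upperIndex_iff h h').not.2 hne)
  simp only [(hM.isSymm _).apply_upperIndex] at hindep
  rw [hindep.integral_fun_mul_eq_mul_integral (hM.memLp i l).aestronglyMeasurable
    (hM.memLp i' l').aestronglyMeasurable, hM.integral_eq_zero, zero_mul]

theorem abs_integral_mul_le [IsProbabilityMeasure μ] (hM : IsNoiseMatrix μ M v) {i l i' l' : ι}
    (heq : s(i, l) = s(i', l')) : |∫ ω, M ω i l * M ω i' l' ∂μ| ≤ v := by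
  have hentry : ∀ ω, M ω i' l' = M ω i l := by
    intro ω
    rcases Sym2.eq_iff.1 heq with ⟨rfl, rfl⟩ | ⟨rfl, rfl⟩
    · rfl
    · exact (hM.isSymm ω).apply _ _
  have hsecond : ∫ ω, M ω i l * M ω i' l' ∂μ = variance (fun ω => M ω i l) μ := by
    rw [variance_eq_sub (hM.memLp i l), hM.integral_eq_zero]
    simp [hentry, sq]
  rw [hsecond, abs_of_nonneg (variance_nonneg _ _)]
  exact hM.variance_le i l

theorem abs_integral_bilinear_le [Fintype ι] [IsProbabilityMeasure μ] (hM : IsNoiseMatrix μ M v)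
    {b c : ι → ℝ} {β : ℝ} (hb : ∀ l, |b l| ≤ β) (hc : ∀ l, |c l| ≤ β) (i i' : ι) :
    |∫ ω, (∑ l, M ω i l * b l) * (∑ l, M ω i' l * c l) ∂μ|
      ≤ (if i = i' then (Fintype.card ι : ℝ) else 1) * (v * β ^ 2) := by
  have hexpand : ∫ ω, (∑ l, M ω i l * b l) * (∑ l, M ω i' l * c l) ∂μ
      = ∑ l, ∑ l', (∫ ω, M ω i l * M ω i' l' ∂μ) * (b l * c l') := by
    rw [integral_sum_mul_sum _ _ fun l l' => by
      simpa only [mul_mul_mul_comm] using (hM.integrable_mul i l i' l').mul_const (b l * c l')]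
    simp_rw [mul_mul_mul_comm _ (b _), integral_mul_const]
  have hterm : ∀ l l', |(∫ ω, M ω i l * M ω i' l' ∂μ) * (b l * c l')|
      ≤ if s(i, l) = s(i', l') then v * β ^ 2 else 0 := by
    intro l l'
    split_ifs with h
    · rw [abs_mul, abs_mul, sq]
      have hv : 0 ≤ v := (abs_nonneg _).trans (hM.abs_integral_mul_le h)
      have hβ : 0 ≤ β := (abs_nonneg _).trans (hb l)
      gcongr
      exacts [hM.abs_integral_mul_le h, hb l, hc l']
    · simp [hM.integral_mul_eq_zero h]
  calc |∫ ω, (∑ l, M ω i l * b l) * (∑ l, M ω i' l * c l) ∂μ|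
      ≤ ∑ l, ∑ l', |(∫ ω, M ω i l * M ω i' l' ∂μ) * (b l * c l')| := by
        rw [hexpand]
        exact (Finset.abs_sum_le_sum_abs _ _).trans
          (Finset.sum_le_sum fun l _ => Finset.abs_sum_le_sum_abs _ _)
    _ ≤ ∑ l, ∑ l', if s(i, l) = s(i', l') then v * β ^ 2 else 0 := by
        gcongr with l _ l' _
        exact hterm l l'
    _ = (if i = i' then (Fintype.card ι : ℝ) else 1) * (v * β ^ 2) := by
        by_cases hii : i = i'
        · subst hii
          simp_rw [Sym2.congr_right]
          simp
        · simp [hii, ite_and]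

theorem memLp_bilinear (hM : IsNoiseMatrix μ M v) [Fintype ι] (b : ι → ℝ) (i : ι) :
    MemLp (fun ω => ∑ l, M ω i l * b l) 2 μ :=
  memLp_finsetSum _ fun l _ => (hM.memLp i l).mul_const _

end IsNoiseMatrix

variable {μ : Measure Ω}

theorem indepFun_entries_of_indepFun_upper {M M' : Ω → Matrix ι ι ℝ}
    (hM : ∀ ω, (M ω).IsSymm) (hMd : ∀ ω i, M ω i i = 0)
    (hM' : ∀ ω, (M' ω).IsSymm) (hM'd : ∀ ω i, M' ω i i = 0)
    (h : IndepFun (fun ω (q : {p : ι × ι // p.1 < p.2}) => M ω q.1.1 q.1.2)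
      (fun ω (q : {p : ι × ι // p.1 < p.2}) => M' ω q.1.1 q.1.2) μ) :
    IndepFun (fun ω i l => M ω i l) (fun ω i l => M' ω i l) μ := by
  have hmeas : Measurable fun u : {p : ι × ι // p.1 < p.2} → ℝ =>
      fun i l => Matrix.symmOfUpper u i l :=
    measurable_pi_lambda _ fun i => measurable_pi_lambda _ fun l => measurable_symmOfUpper_apply i l
  simpa [Function.comp_def, Matrix.symmOfUpper_upper (hM _) (hMd _),
    Matrix.symmOfUpper_upper (hM' _) (hM'd _)] using h.comp hmeas hmeas

end NoiseMatrix

theorem variance_sum_mul_le_of_indepFun {Ω P : Type*} [MeasurableSpace Ω] {μ : Measure Ω}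
    [IsProbabilityMeasure μ] (S : Finset P) {Y Z : P → Ω → ℝ}
    (hYZ : IndepFun (fun ω p => Y p ω) (fun ω p => Z p ω) μ)
    (hY : ∀ p, MemLp (Y p) 2 μ) (hZ : ∀ p, MemLp (Z p) 2 μ) :
    variance (fun ω => ∑ p ∈ S, Y p ω * Z p ω) μ
      ≤ ∑ p ∈ S, ∑ q ∈ S, (∫ ω, Y p ω * Y q ω ∂μ) * (∫ ω, Z p ω * Z q ω ∂μ) := by
  have hpair : ∀ p q, IndepFun (fun ω => Y p ω * Y q ω) (fun ω => Z p ω * Z q ω) μ :=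
    fun p q => hYZ.comp (φ := fun y : P → ℝ => y p * y q) (ψ := fun z : P → ℝ => z p * z q)
      (by fun_prop) (by fun_prop)
  have hint : ∀ p q, Integrable (fun ω => (Y p ω * Y q ω) * (Z p ω * Z q ω)) μ :=
    fun p q => (hpair p q).integrable_mul ((hY p).integrable_mul (hY q))
      ((hZ p).integrable_mul (hZ q))
  have hXint : Integrable (fun ω => ∑ p ∈ S, Y p ω * Z p ω) μ :=
    integrable_finsetSum _ fun p _ => (hY p).integrable_mul (hZ p)
  calc variance (fun ω => ∑ p ∈ S, Y p ω * Z p ω) μ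
      ≤ ∫ ω, (∑ p ∈ S, Y p ω * Z p ω) * (∑ q ∈ S, Y q ω * Z q ω) ∂μ := by
        simpa [sq] using variance_le_expectation_sq hXint.aestronglyMeasurable
    _ = ∑ p ∈ S, ∑ q ∈ S, (∫ ω, Y p ω * Y q ω ∂μ) * (∫ ω, Z p ω * Z q ω ∂μ) := by
        rw [integral_sum_mul_sum _ _ fun p q => by simpa only [mul_mul_mul_comm] using hint p q]
        simp_rw [mul_mul_mul_comm (Y _ _)]
        exact Finset.sum_congr rfl fun p _ => Finset.sum_congr rfl fun q _ =>
          (hpair p q).integral_fun_mul_eq_mul_integral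
            ((hY p).integrable_mul (hY q)).aestronglyMeasurable
            ((hZ p).integrable_mul (hZ q)).aestronglyMeasurable

theorem sum_sum_sq_ite_fst_eq_le {ι κ : Type*} [Fintype ι] [Fintype κ] [DecidableEq ι]
    (S : Finset (ι × κ)) (a : ℝ) :
    ∑ p ∈ S, ∑ q ∈ S, (if p.1 = q.1 then a else 1) ^ 2
      ≤ S.card * (Fintype.card κ * (a ^ 2 + Fintype.card ι)) := by
  have hrow : ∀ p : ι × κ, ∑ q ∈ S, (if p.1 = q.1 then a else 1) ^ 2
      ≤ Fintype.card κ * (a ^ 2 + Fintype.card ι) := by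
    intro p
    calc ∑ q ∈ S, (if p.1 = q.1 then a else 1) ^ 2
        ≤ ∑ q : ι × κ, ((if p.1 = q.1 then a ^ 2 else 0) + 1) := by
          refine Finset.sum_le_univ_sum_of_nonneg (fun q => sq_nonneg _) |>.trans ?_
          gcongr with q
          split_ifs <;> simp
      _ = Fintype.card κ * (a ^ 2 + Fintype.card ι) := by
          simp only [Finset.sum_add_distrib, Fintype.sum_prod_type_right, Finset.sum_ite_eq,
            Finset.mem_univ, ↓reduceIte, Finset.sum_const, Finset.card_univ, nsmul_eq_mul,
            Fintype.card_prod, Nat.cast_mul, mul_one]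
          ring
  simpa using Finset.sum_le_sum fun p (_ : p ∈ S) => hrow p

theorem sum_sum_mul_le_of_abs_le_ite_fst_eq {ι κ : Type*} [Fintype ι] [Fintype κ]
    [DecidableEq ι] (S : Finset (ι × κ)) {A B : ι × κ → ι × κ → ℝ} {a c : ℝ}
    (hA : ∀ p q, |A p q| ≤ (if p.1 = q.1 then a else 1) * c)
    (hB : ∀ p q, |B p q| ≤ (if p.1 = q.1 then a else 1) * c) :
    ∑ p ∈ S, ∑ q ∈ S, A p q * B p q
      ≤ S.card * (Fintype.card κ * (a ^ 2 + Fintype.card ι)) * c ^ 2 :=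
  calc ∑ p ∈ S, ∑ q ∈ S, A p q * B p q
      ≤ ∑ p ∈ S, ∑ q ∈ S, ((if p.1 = q.1 then a else 1) * c) ^ 2 := by
        gcongr with p _ q _
        rw [sq]
        exact (le_abs_self _).trans ((abs_mul _ _).trans_le
          (mul_le_mul (hA p q) (hB p q) (abs_nonneg _) ((abs_nonneg _).trans (hA p q))))
    _ = (∑ p ∈ S, ∑ q ∈ S, (if p.1 = q.1 then a else 1) ^ 2) * c ^ 2 := by
        simp_rw [mul_pow, Finset.sum_mul]
    _ ≤ S.card * (Fintype.card κ * (a ^ 2 + Fintype.card ι)) * c ^ 2 := by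
        gcongr
        exact sum_sum_sq_ite_fst_eq_le S a

theorem variance_product_bilinear_general
    {Ω : Type*} [MeasurableSpace Ω] (μ : Measure Ω) [IsProbabilityMeasure μ]
    (n : ℕ) (hn : 2 ≤ n) (W W' : Ω → Matrix (Fin n) (Fin n) ℝ)
    (hsymm : ∀ ω, (W ω).IsSymm ∧ (W' ω).IsSymm)
    (hdiag : ∀ ω i, W ω i i = 0 ∧ W' ω i i = 0)
    (hindep : iIndepFun
      (fun q : {p : Fin n × Fin n // p.1 < p.2} × Bool =>
        fun ω => (if q.2 then W' ω else W ω) q.1.1.1 q.1.1.2) μ)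
    (hmean : ∀ i j, (∫ ω, W ω i j ∂μ = 0) ∧ (∫ ω, W' ω i j ∂μ = 0))
    (hL2 : ∀ i j, MemLp (fun ω => W ω i j) 2 μ ∧ MemLp (fun ω => W' ω i j) 2 μ)
    (hvar : ∀ i j, variance (fun ω => W ω i j) μ ≤ 1 / n ∧
        variance (fun ω => W' ω i j) μ ≤ 1 / n)
    (b : Fin n → Fin n → ℝ) (hb : ∀ j l, |b j l| ≤ 1 / n)
    (S : Finset (Fin n × Fin n)) :
    variance (fun ω => ∑ p ∈ S,
        (∑ l, W ω p.1 l * b p.2 l) * (∑ l, W' ω p.1 l * b p.2 l)) μ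
      ≤ 3 * S.card / (n : ℝ) ^ 3 := by
  have hW : IsNoiseMatrix μ W (1 / n) :=
    ⟨fun ω => (hsymm ω).1, fun ω i => (hdiag ω i).1,
      fun q q' h => hindep.indepFun (i := (q, false)) (j := (q', false)) (by simpa using h),
      fun i l => (hmean i l).1, fun i l => (hL2 i l).1, fun i l => (hvar i l).1⟩
  have hW' : IsNoiseMatrix μ W' (1 / n) :=
    ⟨fun ω => (hsymm ω).2, fun ω i => (hdiag ω i).2,
      fun q q' h => hindep.indepFun (i := (q, true)) (j := (q', true)) (by simpa using h),
      fun i l => (hmean i l).2, fun i l => (hL2 i l).2, fun i l => (hvar i l).2⟩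
  have hentries := indepFun_entries_of_indepFun_upper hW.isSymm hW.diag_eq_zero hW'.isSymm
    hW'.diag_eq_zero (hindep.indepFun_false_true fun
      | (q, false) => (hL2 q.1.1 q.1.2).1.aemeasurable
      | (q, true) => (hL2 q.1.1 q.1.2).2.aemeasurable)
  have hrows := hentries.comp (φ := fun m (p : Fin n × Fin n) => ∑ l, m p.1 l * b p.2 l)
    (ψ := fun m (p : Fin n × Fin n) => ∑ l, m p.1 l * b p.2 l) (by fun_prop) (by fun_prop)
  have hbilinear : ∀ {M : Ω → Matrix (Fin n) (Fin n) ℝ}, IsNoiseMatrix μ M (1 / n) →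
      ∀ p q : Fin n × Fin n, |∫ ω, (∑ l, M ω p.1 l * b p.2 l) * (∑ l, M ω q.1 l * b q.2 l) ∂μ|
        ≤ (if p.1 = q.1 then (n : ℝ) else 1) * (1 / n * (1 / n) ^ 2) := fun hM p q => by
    simpa using hM.abs_integral_bilinear_le (hb p.2) (hb q.2) p.1 q.1
  calc _ ≤ ∑ p ∈ S, ∑ q ∈ S,
          (∫ ω, (∑ l, W ω p.1 l * b p.2 l) * (∑ l, W ω q.1 l * b q.2 l) ∂μ) *
          (∫ ω, (∑ l, W' ω p.1 l * b p.2 l) * (∑ l, W' ω q.1 l * b q.2 l) ∂μ) :=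
        variance_sum_mul_le_of_indepFun S hrows (fun p => hW.memLp_bilinear _ p.1)
          (fun p => hW'.memLp_bilinear _ p.1)
    _ ≤ S.card * (n * (n ^ 2 + n)) * (1 / n * (1 / n) ^ 2) ^ 2 := by
        simpa using sum_sum_mul_le_of_abs_le_ite_fst_eq S (hbilinear hW) (hbilinear hW')
    _ ≤ 3 * S.card / (n : ℝ) ^ 3 := by
        have hn' : (1 : ℝ) ≤ n := by exact_mod_cast (by omega : 1 ≤ n)
        field_simp
        nlinarith

/-- **Variance bound for products of bilinear forms of two independent noise matrices**
(Lemma D.5, part 2, with explicit constant).  Let `W, W'` be two independent random symmetric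
`n × n` matrices with zero diagonal, each with jointly independent mean-zero upper-triangular
entries of variance at most `1/n`, and let `b₁,…,bₙ` be deterministic vectors with
`‖b_j‖_∞ ≤ 1/n`.  Then for every `S ⊆ [n] × [n]`:
`Var(∑_{(i,j) ∈ S} (eᵢᵀ W b_j)(eᵢᵀ W' b_j)) ≤ 3 |S| / n³`. -/
theorem variance_product_bilinear
    {Ω : Type*} [MeasurableSpace Ω] (μ : Measure Ω) [IsProbabilityMeasure μ]
    (n : ℕ) (hn : 2 ≤ n) (W W' : Ω → Matrix (Fin n) (Fin n) ℝ)
    (hsymm : ∀ ω, (W ω).IsSymm ∧ (W' ω).IsSymm)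
    (hdiag : ∀ ω i, W ω i i = 0 ∧ W' ω i i = 0)
    (hmeas : ∀ i j, Measurable (fun ω => W ω i j) ∧ Measurable (fun ω => W' ω i j))
    (hindep : iIndepFun
      (fun q : {p : Fin n × Fin n // p.1 < p.2} × Bool =>
        fun ω => (if q.2 then W' ω else W ω) q.1.1.1 q.1.1.2) μ)
    (hmean : ∀ i j, (∫ ω, W ω i j ∂μ = 0) ∧ (∫ ω, W' ω i j ∂μ = 0))
    (hL2 : ∀ i j, MemLp (fun ω => W ω i j) 2 μ ∧ MemLp (fun ω => W' ω i j) 2 μ)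
    (hvar : ∀ i j, variance (fun ω => W ω i j) μ ≤ 1 / n ∧
        variance (fun ω => W' ω i j) μ ≤ 1 / n)
    (b : Fin n → Fin n → ℝ) (hb : ∀ j l, |b j l| ≤ 1 / n)
    (S : Finset (Fin n × Fin n)) :
    variance (fun ω => ∑ p ∈ S,
        (∑ l, W ω p.1 l * b p.2 l) * (∑ l, W' ω p.1 l * b p.2 l)) μ
      ≤ 3 * S.card / (n : ℝ) ^ 3 :=
  variance_product_bilinear_general μ n hn W W' hsymm hdiag hindep hmean hL2 hvar b hb S
end

section
/- Moment bounds for the normalized averaged noise (claim (A.44) in the proof of Lemma D.1). Let n, T be positive integers, rho in (0,1], and let w^{(1)}, ..., w^{(T)} be i.i.d. real random variables with E(w^{(t)}) = 0, |w^{(t)}| <= 1 almost surely, and E( (w^{(t)})^2 ) <= rho. Set q = sqrt(n rho) and w~ = ( sqrt(T) q )^{-1} sum_{t=1}^T w^{(t)}. Then E( w~^2 ) <= 1/n, and for every integer k >= 3 there exists a constant C_k depending only on k such that E( |w~|^k ) <= C_k ( n^{-1} ( T q^2 )^{-(k-2)/2} + n^{-1} n^{-(k-2)/2} ). -/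
/-!
Write `S = ∑ₜ w⁽ᵗ⁾` and `x = Tρ`. Independence and `E w = 0` give `E S² = ∑ₜ E (w⁽ᵗ⁾)² ≤ x`.
For the higher even moments add the summands one at a time: if `Y` is independent of `X`,
in the binomial expansion of `E (X + Y)^(2m+2)` the term linear in `Y` vanishes and, as
`|Y| ≤ 1`, the terms other than `E X^(2m+2)` add up to at most `4^(m+1) E Y² (1 + E X^(2m))`.
Summing the steps yields the Rosenthal-type bound `E S^(2m) ≤ R_m (x^m + x)`. Cauchy–Schwarz,
`E |S|^(k+1) ≤ (E S^(2k))^(1/2) (E S²)^(1/2)`, then gives `E |S|^(k+1) ≤ √R_k (x^((k+1)/2) + x)`,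
and the claim follows on dividing by `(Tnρ)^((k+1)/2) = (n x)^((k+1)/2)`.
-/

open MeasureTheory ProbabilityTheory Finset

lemma abs_pow_le_one_add_pow (x : ℝ) {j p : ℕ} (hjp : j ≤ p) (hp : Even p) :
    |x| ^ j ≤ 1 + x ^ p := by
  rcases le_total |x| 1 with hx | hx
  · linarith [pow_le_one₀ (abs_nonneg x) hx (n := j), hp.pow_nonneg x]
  · linarith [pow_le_pow_right₀ hx hjp, hp.pow_abs x]

lemma sq_le_pow_add_self {x : ℝ} (hx : 0 ≤ x) {m : ℕ} (hm : 2 ≤ m) : x ^ 2 ≤ x ^ m + x := by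
  rcases le_total x 1 with h | h
  · nlinarith [pow_nonneg hx m]
  · linarith [pow_le_pow_right₀ h hm]

lemma sum_range_choose_le_four_pow (m : ℕ) :
    ∑ j ∈ range (2 * m + 1), ((2 * m + 2).choose j : ℝ) ≤ 4 ^ (m + 1) := by
  calc ∑ j ∈ range (2 * m + 1), ((2 * m + 2).choose j : ℝ)
      ≤ ∑ j ∈ range (2 * m + 2 + 1), ((2 * m + 2).choose j : ℝ) :=
        sum_le_sum_of_subset_of_nonneg (range_subset_range.2 (by omega)) fun _ _ _ => by positivity
    _ = 4 ^ (m + 1) := by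
        rw [← Nat.cast_sum, Nat.sum_range_choose, show 2 * m + 2 = 2 * (m + 1) by ring, pow_mul]
        norm_num

lemma one_div_mul_rpow_neg_sub_two_div_two {a : ℝ} (ha : 0 < a) (k : ℕ) :
    1 / a * a ^ (-(((k : ℝ) - 2) / 2)) = (√a ^ k)⁻¹ := by
  rw [Real.sqrt_eq_rpow, ← Real.rpow_natCast, ← Real.rpow_mul ha.le, ← Real.rpow_neg ha.le,
    one_div, ← Real.rpow_neg_one, ← Real.rpow_add ha]
  ring_nf

section Moments

variable {Ω : Type*} [MeasurableSpace Ω] {μ : Measure Ω}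

lemma integrable_pow_of_abs_le [IsFiniteMeasure μ] {X : Ω → ℝ} (hX : AEStronglyMeasurable X μ)
    {C : ℝ} (hC : ∀ᵐ ω ∂μ, |X ω| ≤ C) (p : ℕ) : Integrable (fun ω => X ω ^ p) μ :=
  Integrable.of_bound (hX.pow p) (C ^ p) <| by
    filter_upwards [hC] with ω hω
    rw [Real.norm_eq_abs, abs_pow]
    exact pow_le_pow_left₀ (abs_nonneg _) hω p

lemma abs_integral_pow_le_one_add [IsProbabilityMeasure μ] {X : Ω → ℝ}
    (hX : ∀ p : ℕ, Integrable (fun ω => X ω ^ p) μ) {j p : ℕ} (hjp : j ≤ p) (hp : Even p) :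
    |∫ ω, X ω ^ j ∂μ| ≤ 1 + ∫ ω, X ω ^ p ∂μ := by
  calc |∫ ω, X ω ^ j ∂μ| ≤ ∫ ω, |X ω ^ j| ∂μ := abs_integral_le_integral_abs
    _ ≤ ∫ ω, (1 + X ω ^ p) ∂μ :=
        integral_mono (hX j).abs ((integrable_const 1).add (hX p)) fun ω => by
          simpa only [abs_pow] using abs_pow_le_one_add_pow (X ω) hjp hp
    _ = 1 + ∫ ω, X ω ^ p ∂μ := by
        rw [integral_add (integrable_const 1) (hX p), integral_const, probReal_univ, one_smul]

lemma abs_integral_pow_le_integral_sq [IsFiniteMeasure μ] {Y : Ω → ℝ}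
    (hY : AEStronglyMeasurable Y μ) (hY1 : ∀ᵐ ω ∂μ, |Y ω| ≤ 1) {q : ℕ} (hq : 2 ≤ q) :
    |∫ ω, Y ω ^ q ∂μ| ≤ ∫ ω, Y ω ^ 2 ∂μ := by
  calc |∫ ω, Y ω ^ q ∂μ| ≤ ∫ ω, |Y ω ^ q| ∂μ := abs_integral_le_integral_abs
    _ ≤ ∫ ω, Y ω ^ 2 ∂μ := by
        refine integral_mono_ae (integrable_pow_of_abs_le hY hY1 q).abs
          (integrable_pow_of_abs_le hY hY1 2) ?_
        filter_upwards [hY1] with ω hω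
        rw [abs_pow, ← sq_abs (Y ω)]
        exact pow_le_pow_of_le_one (abs_nonneg _) hω hq

lemma integral_abs_pow_succ_le_sqrt_mul_sqrt {X : Ω → ℝ} (hX : AEStronglyMeasurable X μ) (k : ℕ)
    (h2k : Integrable (fun ω => X ω ^ (2 * k)) μ) (h2 : Integrable (fun ω => X ω ^ 2) μ) :
    ∫ ω, |X ω| ^ (k + 1) ∂μ ≤ √(∫ ω, X ω ^ (2 * k) ∂μ) * √(∫ ω, X ω ^ 2 ∂μ) := by
  have hsq : ∀ j : ℕ, (fun ω => (|X ω| ^ j) ^ 2) = fun ω => X ω ^ (2 * j) := fun j => by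
    ext ω; rw [← pow_mul, mul_comm, (even_two_mul j).pow_abs]
  have hmem : ∀ j : ℕ, Integrable (fun ω => X ω ^ (2 * j)) μ →
      MemLp (fun ω => |X ω| ^ j) (ENNReal.ofReal 2) μ := fun j hj => by
    rw [ENNReal.ofReal_ofNat, memLp_two_iff_integrable_sq (f := fun ω => |X ω| ^ j)
      ((continuous_abs.comp_aestronglyMeasurable hX).pow j), hsq]
    exact hj
  have h := integral_mul_le_Lp_mul_Lq_of_nonneg Real.HolderConjugate.two_two
    (Filter.Eventually.of_forall fun ω => pow_nonneg (abs_nonneg (X ω)) k)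
    (Filter.Eventually.of_forall fun ω => abs_nonneg (X ω)) (hmem k h2k)
    (by simpa using hmem 1 (by simpa using h2))
  simp only [Real.rpow_two, ← Real.sqrt_eq_rpow, sq_abs] at h
  rw [hsq k] at h
  simpa only [pow_succ] using h

lemma ProbabilityTheory.IndepFun.integral_add_pow {X Y : Ω → ℝ} (hXY : IndepFun X Y μ)
    (hX : ∀ p : ℕ, Integrable (fun ω => X ω ^ p) μ)
    (hY : ∀ p : ℕ, Integrable (fun ω => Y ω ^ p) μ) (n : ℕ) :
    ∫ ω, (X ω + Y ω) ^ n ∂μ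
      = ∑ j ∈ range (n + 1), (∫ ω, X ω ^ j ∂μ) * (∫ ω, Y ω ^ (n - j) ∂μ) * n.choose j := by
  have hpow : ∀ i j : ℕ, IndepFun (fun ω => X ω ^ i) (fun ω => Y ω ^ j) μ := fun i j =>
    hXY.comp (measurable_id.pow_const i) (measurable_id.pow_const j)
  simp_rw [add_pow]
  rw [integral_finsetSum _ fun j _ => by
    exact ((hpow j (n - j)).integrable_mul (hX j) (hY _)).mul_const _]
  refine sum_congr rfl fun j _ => ?_
  rw [integral_mul_const, (hpow j (n - j)).integral_fun_mul_eq_mul_integral (hX j).1 (hY _).1]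

lemma ProbabilityTheory.IndepFun.integral_add_pow_two_mul_add_two_le [IsProbabilityMeasure μ]
    {X Y : Ω → ℝ} (hXY : IndepFun X Y μ) (hX : ∀ p : ℕ, Integrable (fun ω => X ω ^ p) μ)
    (hY : AEStronglyMeasurable Y μ) (hY1 : ∀ᵐ ω ∂μ, |Y ω| ≤ 1) (hY0 : ∫ ω, Y ω ∂μ = 0) (m : ℕ) :
    ∫ ω, (X ω + Y ω) ^ (2 * m + 2) ∂μ
      ≤ ∫ ω, X ω ^ (2 * m + 2) ∂μ
        + 4 ^ (m + 1) * (∫ ω, Y ω ^ 2 ∂μ) * (1 + ∫ ω, X ω ^ (2 * m) ∂μ) := by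
  set A : ℕ → ℝ := fun j =>
    (∫ ω, X ω ^ j ∂μ) * (∫ ω, Y ω ^ (2 * m + 2 - j) ∂μ) * (2 * m + 2).choose j
  have hX2m : 0 ≤ ∫ ω, X ω ^ (2 * m) ∂μ :=
    integral_nonneg fun ω => (even_two_mul m).pow_nonneg (X ω)
  have hterm : ∀ j ∈ range (2 * m + 1),
      A j ≤ (2 * m + 2).choose j * ((∫ ω, Y ω ^ 2 ∂μ) * (1 + ∫ ω, X ω ^ (2 * m) ∂μ)) := by
    intro j hj
    have hj := mem_range.1 hj
    calc A j ≤ |∫ ω, X ω ^ j ∂μ| * |∫ ω, Y ω ^ (2 * m + 2 - j) ∂μ| * (2 * m + 2).choose j := by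
          simp only [A, ← abs_mul]
          exact mul_le_mul_of_nonneg_right (le_abs_self _) (Nat.cast_nonneg _)
      _ ≤ (1 + ∫ ω, X ω ^ (2 * m) ∂μ) * (∫ ω, Y ω ^ 2 ∂μ) * (2 * m + 2).choose j := by
          refine mul_le_mul_of_nonneg_right (mul_le_mul ?_ ?_ (abs_nonneg _) ?_)
            (Nat.cast_nonneg _)
          · exact abs_integral_pow_le_one_add hX (by omega) (even_two_mul m)
          · exact abs_integral_pow_le_integral_sq hY hY1 (by omega)
          · linarith
      _ = _ := by ring
  have hsum : ∑ j ∈ range (2 * m + 1), A j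
      ≤ 4 ^ (m + 1) * ((∫ ω, Y ω ^ 2 ∂μ) * (1 + ∫ ω, X ω ^ (2 * m) ∂μ)) := by
    have hB : 0 ≤ (∫ ω, Y ω ^ 2 ∂μ) * (1 + ∫ ω, X ω ^ (2 * m) ∂μ) :=
      mul_nonneg (integral_nonneg fun ω => sq_nonneg _) (by linarith)
    calc ∑ j ∈ range (2 * m + 1), A j
        ≤ (∑ j ∈ range (2 * m + 1), ((2 * m + 2).choose j : ℝ))
            * ((∫ ω, Y ω ^ 2 ∂μ) * (1 + ∫ ω, X ω ^ (2 * m) ∂μ)) := by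
          rw [sum_mul]; exact sum_le_sum hterm
      _ ≤ _ := mul_le_mul_of_nonneg_right (sum_range_choose_le_four_pow m) hB
  have hY' := integrable_pow_of_abs_le hY hY1
  rw [hXY.integral_add_pow hX hY', show 2 * m + 2 + 1 = 2 * m + 1 + 1 + 1 from rfl,
    sum_range_succ, sum_range_succ]
  have hmid : A (2 * m + 1) = 0 := by
    simp [A, show 2 * m + 2 - (2 * m + 1) = 1 by omega, hY0]
  have hlast : A (2 * m + 1 + 1) = ∫ ω, X ω ^ (2 * m + 2) ∂μ := by simp [A]
  change ∑ j ∈ range (2 * m + 1), A j + A (2 * m + 1) + A (2 * m + 1 + 1) ≤ _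
  rw [hmid, hlast]
  linarith

end Moments

section PartialSums

variable {Ω ι : Type*} [MeasurableSpace Ω] {μ : Measure Ω} [IsProbabilityMeasure μ]
  {w : ι → Ω → ℝ} {ρ : ℝ}

lemma integrable_sum_pow (hw : ∀ t, Measurable (w t)) (hw1 : ∀ t, ∀ᵐ ω ∂μ, |w t ω| ≤ 1)
    (s : Finset ι) (p : ℕ) : Integrable (fun ω => (∑ t ∈ s, w t ω) ^ p) μ := by
  refine integrable_pow_of_abs_le (s.measurable_fun_sum fun t _ => hw t).aestronglyMeasurable
    ?_ p (C := s.card)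
  filter_upwards [(Filter.eventually_all_finset s).2 fun t _ => hw1 t] with ω hω
  calc |∑ t ∈ s, w t ω| ≤ ∑ t ∈ s, |w t ω| := abs_sum_le_sum_abs _ _
    _ ≤ ∑ _t ∈ s, (1 : ℝ) := sum_le_sum hω
    _ = s.card := by simp

lemma integral_sum_sq (hw : ∀ t, Measurable (w t)) (hindep : iIndepFun w μ)
    (hw0 : ∀ t, ∫ ω, w t ω ∂μ = 0) (hw1 : ∀ t, ∀ᵐ ω ∂μ, |w t ω| ≤ 1) (s : Finset ι) :
    ∫ ω, (∑ t ∈ s, w t ω) ^ 2 ∂μ = ∑ t ∈ s, ∫ ω, w t ω ^ 2 ∂μ := by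
  have hL2 : ∀ t, MemLp (w t) 2 μ := fun t =>
    (memLp_two_iff_integrable_sq (hw t).aestronglyMeasurable).2
      (integrable_pow_of_abs_le (hw t).aestronglyMeasurable (hw1 t) 2)
  have hsum := IndepFun.variance_sum (s := s) (fun t _ => hL2 t)
    fun i _ j _ hij => hindep.indepFun hij
  have hS0 : ∫ ω, ∑ t ∈ s, w t ω ∂μ = 0 := by
    rw [integral_finsetSum _ fun t _ => (hL2 t).integrable one_le_two]
    exact sum_eq_zero fun t _ => hw0 t
  rw [sum_fn, variance_of_integral_eq_zero (s.measurable_sum fun t _ => hw t).aemeasurable hS0]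
    at hsum
  simpa only [fun t => variance_of_integral_eq_zero (hw t).aemeasurable (hw0 t)] using hsum

lemma integral_sum_sq_le (hw : ∀ t, Measurable (w t)) (hindep : iIndepFun w μ)
    (hw0 : ∀ t, ∫ ω, w t ω ∂μ = 0) (hw1 : ∀ t, ∀ᵐ ω ∂μ, |w t ω| ≤ 1)
    (hvar : ∀ t, ∫ ω, w t ω ^ 2 ∂μ ≤ ρ) (s : Finset ι) :
    ∫ ω, (∑ t ∈ s, w t ω) ^ 2 ∂μ ≤ s.card * ρ := by
  rw [integral_sum_sq hw hindep hw0 hw1]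
  simpa using sum_le_sum fun t (_ : t ∈ s) => hvar t

lemma integral_sum_pow_two_mul_add_two_le (hw : ∀ t, Measurable (w t)) (hindep : iIndepFun w μ)
    (hw0 : ∀ t, ∫ ω, w t ω ∂μ = 0) (hw1 : ∀ t, ∀ᵐ ω ∂μ, |w t ω| ≤ 1)
    (hvar : ∀ t, ∫ ω, w t ω ^ 2 ∂μ ≤ ρ) (m : ℕ) {B : ℝ} (s : Finset ι)
    (hB : ∀ s' ⊆ s, ∫ ω, (∑ t ∈ s', w t ω) ^ (2 * m) ∂μ ≤ B) :
    ∫ ω, (∑ t ∈ s, w t ω) ^ (2 * m + 2) ∂μ ≤ 4 ^ (m + 1) * (s.card * ρ) * (1 + B) := by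
  classical
  induction s using Finset.induction_on with
  | empty => simp
  | insert a s ha ih =>
    have hindep' : IndepFun (fun ω => ∑ t ∈ s, w t ω) (w a) μ := by
      simpa only [sum_fn] using hindep.indepFun_finsetSum_of_notMem hw ha
    have hstep := hindep'.integral_add_pow_two_mul_add_two_le (integrable_sum_pow hw hw1 s)
      (hw a).aestronglyMeasurable (hw1 a) (hw0 a) m
    have hS : 0 ≤ ∫ ω, (∑ t ∈ s, w t ω) ^ (2 * m) ∂μ :=
      integral_nonneg fun ω => (even_two_mul m).pow_nonneg _
    have hvar' : (∫ ω, w a ω ^ 2 ∂μ) * (1 + ∫ ω, (∑ t ∈ s, w t ω) ^ (2 * m) ∂μ) ≤ ρ * (1 + B) :=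
      mul_le_mul (hvar a) (by linarith [hB s (subset_insert a s)]) (by linarith)
        ((integral_nonneg fun ω => sq_nonneg (w a ω)).trans (hvar a))
    have ih' := ih fun s' hs' => hB s' (hs'.trans (subset_insert a s))
    simp_rw [sum_insert ha, add_comm (w a _), card_insert_of_notMem ha]
    push_cast
    have h4 := mul_le_mul_of_nonneg_left hvar' (by positivity : (0 : ℝ) ≤ 4 ^ (m + 1))
    linarith

/-- `R (m + 1) = 4 ^ (m + 1) * (1 + 2 * R m)` is what one induction step produces: adding a
summand costs `4 ^ (m + 1) * ρ * (1 + E S ^ (2 * m))`, and `x ^ 2 ≤ x ^ (m + 1) + x`. -/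
noncomputable def rosenthalConst : ℕ → ℝ
  | 0 => 1
  | m + 1 => 4 ^ (m + 1) * (1 + 2 * rosenthalConst m)

lemma rosenthalConst_pos (m : ℕ) : 0 < rosenthalConst m := by
  induction m with
  | zero => norm_num [rosenthalConst]
  | succ m ih => rw [rosenthalConst]; positivity

lemma integral_sum_pow_two_mul_le (hρ : 0 ≤ ρ) (hw : ∀ t, Measurable (w t))
    (hindep : iIndepFun w μ) (hw0 : ∀ t, ∫ ω, w t ω ∂μ = 0) (hw1 : ∀ t, ∀ᵐ ω ∂μ, |w t ω| ≤ 1)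
    (hvar : ∀ t, ∫ ω, w t ω ^ 2 ∂μ ≤ ρ) {m : ℕ} (hm : 1 ≤ m) (s : Finset ι) :
    ∫ ω, (∑ t ∈ s, w t ω) ^ (2 * m) ∂μ
      ≤ rosenthalConst m * ((s.card * ρ) ^ m + s.card * ρ) := by
  induction m, hm using Nat.le_induction generalizing s with
  | base =>
    have hx : 0 ≤ (s.card : ℝ) * ρ := by positivity
    have h2 := integral_sum_sq_le hw hindep hw0 hw1 hvar s
    norm_num [rosenthalConst]
    linarith
  | succ m hm ih =>
    set x : ℝ := s.card * ρ
    have hx : 0 ≤ x := by positivity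
    have hmono : ∀ s' ⊆ s, rosenthalConst m * ((s'.card * ρ) ^ m + s'.card * ρ)
        ≤ rosenthalConst m * (x ^ m + x) := fun s' hs' => by
      have hx' : (s'.card : ℝ) * ρ ≤ x :=
        mul_le_mul_of_nonneg_right (by exact_mod_cast card_le_card hs') hρ
      exact mul_le_mul_of_nonneg_left
        (add_le_add (pow_le_pow_left₀ (by positivity) hx' m) hx') (rosenthalConst_pos m).le
    have h := integral_sum_pow_two_mul_add_two_le hw hindep hw0 hw1 hvar m s
      fun s' hs' => (ih s').trans (hmono s' hs')
    have hR := rosenthalConst_pos m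
    have hx2 := mul_le_mul_of_nonneg_left (sq_le_pow_add_self hx (by omega : 2 ≤ m + 1)) hR.le
    calc ∫ ω, (∑ t ∈ s, w t ω) ^ (2 * (m + 1)) ∂μ
        ≤ 4 ^ (m + 1) * x * (1 + rosenthalConst m * (x ^ m + x)) := h
      _ = 4 ^ (m + 1) * (x + rosenthalConst m * (x ^ (m + 1) + x ^ 2)) := by ring
      _ ≤ 4 ^ (m + 1) * ((1 + 2 * rosenthalConst m) * (x ^ (m + 1) + x)) := by
          gcongr
          nlinarith [pow_nonneg hx (m + 1)]
      _ = rosenthalConst (m + 1) * (x ^ (m + 1) + x) := by rw [rosenthalConst]; ring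

lemma integral_abs_sum_pow_succ_le (hρ : 0 ≤ ρ) (hw : ∀ t, Measurable (w t))
    (hindep : iIndepFun w μ) (hw0 : ∀ t, ∫ ω, w t ω ∂μ = 0) (hw1 : ∀ t, ∀ᵐ ω ∂μ, |w t ω| ≤ 1)
    (hvar : ∀ t, ∫ ω, w t ω ^ 2 ∂μ ≤ ρ) {k : ℕ} (hk : 1 ≤ k) (s : Finset ι) :
    ∫ ω, |∑ t ∈ s, w t ω| ^ (k + 1) ∂μ
      ≤ √(rosenthalConst k) * (√(s.card * ρ) ^ (k + 1) + s.card * ρ) := by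
  set x : ℝ := s.card * ρ
  have hx : 0 ≤ x := by positivity
  have hsqrt : √((x ^ k + x) * x) ≤ √x ^ (k + 1) + x := by
    refine Real.sqrt_le_iff.2 ⟨by positivity, ?_⟩
    have hpow : (√x ^ (k + 1)) ^ 2 = x ^ (k + 1) := by
      rw [← pow_mul, mul_comm, pow_mul, Real.sq_sqrt hx]
    nlinarith [pow_succ x k, mul_nonneg (pow_nonneg (Real.sqrt_nonneg x) (k + 1)) hx]
  calc ∫ ω, |∑ t ∈ s, w t ω| ^ (k + 1) ∂μ
      ≤ √(∫ ω, (∑ t ∈ s, w t ω) ^ (2 * k) ∂μ) * √(∫ ω, (∑ t ∈ s, w t ω) ^ 2 ∂μ) :=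
        integral_abs_pow_succ_le_sqrt_mul_sqrt
          (s.measurable_sum fun t _ => hw t).aestronglyMeasurable k
          (integrable_sum_pow hw hw1 s _) (integrable_sum_pow hw hw1 s _)
    _ ≤ √(rosenthalConst k * (x ^ k + x)) * √x := by
        gcongr
        · exact integral_sum_pow_two_mul_le hρ hw hindep hw0 hw1 hvar hk s
        · exact integral_sum_sq_le hw hindep hw0 hw1 hvar s
    _ = √(rosenthalConst k) * √((x ^ k + x) * x) := by
        rw [Real.sqrt_mul (rosenthalConst_pos k).le, mul_assoc, ← Real.sqrt_mul (by positivity)]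
    _ ≤ √(rosenthalConst k) * (√x ^ (k + 1) + x) := by gcongr

end PartialSums

lemma div_sqrt_pow_le_of_le {Z C x y n : ℝ} (hx : 0 < x) (hn : 0 < n) (hy : y = n * x) {k : ℕ}
    (h : Z ≤ C * (√x ^ k + x)) :
    Z / √y ^ k
      ≤ C * (1 / n * y ^ (-(((k : ℝ) - 2) / 2)) + 1 / n * n ^ (-(((k : ℝ) - 2) / 2))) := by
  have hy0 : 0 < y := hy ▸ mul_pos hn hx
  have h1 : 1 / n * y ^ (-(((k : ℝ) - 2) / 2)) = x / √y ^ k := by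
    have hn' : 1 / n = x * (1 / y) := by rw [hy]; field_simp
    rw [hn', mul_assoc, one_div_mul_rpow_neg_sub_two_div_two hy0, div_eq_mul_inv]
  have h2 : 1 / n * n ^ (-(((k : ℝ) - 2) / 2)) = √x ^ k / √y ^ k := by
    rw [one_div_mul_rpow_neg_sub_two_div_two hn, hy, Real.sqrt_mul hn.le, mul_pow]
    field_simp
  rw [h1, h2, ← add_div, ← mul_div_assoc, add_comm x]
  exact div_le_div_of_nonneg_right h (by positivity)

/-- **Moment bounds for the normalized averaged noise** (claim (A.44) in the proof of
Lemma D.1).  Let `w⁽¹⁾,…,w⁽ᵀ⁾` be i.i.d. real random variables with mean zero, `|w| ≤ 1`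
almost surely and `E w² ≤ ρ`, and set `q = √(nρ)` and `w̃ = (√T q)⁻¹ ∑ₜ w⁽ᵗ⁾`.  Then
`E w̃² ≤ 1/n`, and for every `k ≥ 3` there exists a constant `C_k` depending only on `k`
such that `E|w̃|ᵏ ≤ C_k (n⁻¹ (T q²)^{-(k-2)/2} + n⁻¹ n^{-(k-2)/2})`. -/
theorem averaged_noise_moment_bounds :
    (∀ (Ω : Type) [MeasurableSpace Ω] (μ : Measure Ω) [IsProbabilityMeasure μ]
        (n T : ℕ) (ρ : ℝ) (w : Fin T → Ω → ℝ),
      1 ≤ n → 1 ≤ T → ρ ∈ Set.Ioc (0 : ℝ) 1 →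
      (∀ t, Measurable (w t)) →
      iIndepFun w μ →
      (∀ t t', IdentDistrib (w t) (w t') μ μ) →
      (∀ t, ∫ ω, w t ω ∂μ = 0) →
      (∀ t, ∀ᵐ ω ∂μ, |w t ω| ≤ 1) →
      (∀ t, ∫ ω, (w t ω) ^ 2 ∂μ ≤ ρ) →
      ∫ ω, ((∑ t, w t ω) / (Real.sqrt T * Real.sqrt (n * ρ))) ^ 2 ∂μ ≤ 1 / n) ∧
    (∀ k : ℕ, 3 ≤ k → ∃ C : ℝ, 0 < C ∧
      ∀ (Ω : Type) [MeasurableSpace Ω] (μ : Measure Ω) [IsProbabilityMeasure μ]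
          (n T : ℕ) (ρ : ℝ) (w : Fin T → Ω → ℝ),
        1 ≤ n → 1 ≤ T → ρ ∈ Set.Ioc (0 : ℝ) 1 →
        (∀ t, Measurable (w t)) →
        iIndepFun w μ →
        (∀ t t', IdentDistrib (w t) (w t') μ μ) →
        (∀ t, ∫ ω, w t ω ∂μ = 0) →
        (∀ t, ∀ᵐ ω ∂μ, |w t ω| ≤ 1) →
        (∀ t, ∫ ω, (w t ω) ^ 2 ∂μ ≤ ρ) →
        ∫ ω, |(∑ t, w t ω) / (Real.sqrt T * Real.sqrt (n * ρ))| ^ k ∂μ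
          ≤ C * ((1 / n) * (((T : ℝ) * ((n : ℝ) * ρ)) ^ (-(((k : ℝ) - 2) / 2)))
              + (1 / n) * ((n : ℝ) ^ (-(((k : ℝ) - 2) / 2))))) := by
  constructor
  · intro Ω _ μ _ n T ρ w hn hT hρ hw hindep _ hw0 hw1 hvar
    have hρ0 := hρ.1
    have hS := integral_sum_sq_le hw hindep hw0 hw1 hvar univ
    rw [card_univ, Fintype.card_fin] at hS
    rw [← Real.sqrt_mul (Nat.cast_nonneg T)]
    simp_rw [div_pow, Real.sq_sqrt (by positivity : (0 : ℝ) ≤ T * (n * ρ))]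
    rw [integral_div, div_le_iff₀ (by positivity)]
    calc ∫ ω, (∑ t, w t ω) ^ 2 ∂μ ≤ T * ρ := hS
      _ = 1 / n * (T * (n * ρ)) := by field_simp [(Nat.cast_pos.2 hn).ne']
  · intro k hk
    obtain ⟨j, rfl⟩ : ∃ j, k = j + 1 := ⟨k - 1, by omega⟩
    refine ⟨√(rosenthalConst j), Real.sqrt_pos.2 (rosenthalConst_pos j), ?_⟩
    intro Ω _ μ _ n T ρ w hn hT hρ hw hindep _ hw0 hw1 hvar
    have h := integral_abs_sum_pow_succ_le hρ.1.le hw hindep hw0 hw1 hvar (k := j) (by omega)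
      univ
    rw [card_univ, Fintype.card_fin] at h
    rw [← Real.sqrt_mul (Nat.cast_nonneg T)]
    simp_rw [abs_div, abs_of_nonneg (Real.sqrt_nonneg _), div_pow]
    rw [integral_div]
    exact div_sqrt_pow_le_of_le (mul_pos (Nat.cast_pos.2 hT) hρ.1) (Nat.cast_pos.2 hn)
      (by ring) h
end
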